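/- arXiv:2107.06952 — 9 statements merged into one kernel-verified Lean document; each statement's English description precedes it below -/
import Mathlib

section
/- For every integer n ≥ 6, the numbers c_n satisfy the recurrence c_n = 2·c_{n−1} − (−1)^n · c_{⌊n/2⌋+1}. -/
/-- The Conway number (correlation) `C(A,B)` of two head/tail strings of length `n`,
encoded as functions `Fin n → Bool` (with `H = true`, `T = false`, and 0-indexed
positions): `C(A,B) = ∑_{i=1}^n δ_i 2^{n-i}` where `δ_i = 1` iff `a_{i+j} = b_{1+j}`
for all `j = 0,…,n-i`. -/
def conway {n : ℕ} (A B : Fin n → Bool) : ℕ :=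
  ∑ i : Fin n,
    if (∀ j : Fin n, (i : ℕ) + (j : ℕ) < n → A (i + j) = B j) then 2 ^ (n - 1 - (i : ℕ)) else 0

/-- `cstar m` is the number of head/tail strings of length `m` beginning with `HT`,
ending with `TH`, whose autocorrelation is `2^{m-1} + 1`. -/
def cstar (m : ℕ) : ℕ :=
  Fintype.card {A : Fin m → Bool //
    (∀ i : Fin m, (i : ℕ) = 0 → A i = true) ∧
    (∀ i : Fin m, (i : ℕ) = 1 → A i = false) ∧
    (∀ i : Fin m, (i : ℕ) = m - 2 → A i = false) ∧
    (∀ i : Fin m, (i : ℕ) = m - 1 → A i = true) ∧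
    conway A A = 2 ^ (m - 1) + 1}

/-- `c n = 2 * cstar (n-1)`: by Csirik's characterization, the number of optimal
strategies for Player I in the Penney-Ante game with strings of length `n`. -/
def c (n : ℕ) : ℕ := 2 * cstar (n - 1)

namespace Csirik

/-- border of length `b` of a length-`m` string -/
def Br (m b : ℕ) (A : ℕ → Bool) : Prop := ∀ i < b, A i = A (m - b + i)

def EndP (m : ℕ) (A : ℕ → Bool) : Prop :=
  A 0 = true ∧ A 1 = false ∧ A (m - 2) = false ∧ A (m - 1) = true

def Good (m : ℕ) (A : ℕ → Bool) : Prop :=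
  EndP m A ∧ ∀ b, 2 ≤ b → b < m → ¬ Br m b A

def ext {m : ℕ} (A : Fin m → Bool) : ℕ → Bool :=
  fun i => if h : i < m then A ⟨i, h⟩ else false

def insN (p : ℕ) (c : Bool) (B : ℕ → Bool) : ℕ → Bool :=
  fun i => if i < p then B i else if i = p then c else B (i - 1)

def delN (p : ℕ) (A : ℕ → Bool) : ℕ → Bool :=
  fun i => if i < p then A i else A (i + 1)

lemma Br_congr {m b : ℕ} {A A' : ℕ → Bool} (hb : b ≤ m) (h : ∀ i < m, A i = A' i) :
    Br m b A ↔ Br m b A' := by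
  unfold Br
  constructor <;> intro H i hi <;>
    [rw [← h i (by omega), ← h (m - b + i) (by omega)]; rw [h i (by omega), h (m - b + i) (by omega)]] <;>
    exact H i hi

lemma EndP_congr {m : ℕ} (hm : 2 ≤ m) {A A' : ℕ → Bool} (h : ∀ i < m, A i = A' i) :
    EndP m A ↔ EndP m A' := by
  unfold EndP
  rw [h 0 (by omega), h 1 (by omega), h (m-2) (by omega), h (m-1) (by omega)]

lemma Good_congr {m : ℕ} (hm : 2 ≤ m) {A A' : ℕ → Bool} (h : ∀ i < m, A i = A' i) :
    Good m A ↔ Good m A' := by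
  unfold Good
  rw [EndP_congr (by omega) h]
  refine and_congr_right fun _ => ?_
  exact forall₃_congr fun b h2 hb => not_congr (Br_congr (by omega) h)

/-- descent: a long border yields a shorter one -/
lemma Br_descent {m b : ℕ} {A : ℕ → Bool} (hb : Br m b A) (h : m < 2 * b) (hbm : b ≤ m) :
    Br m (2 * b - m) A := by
  intro i hi
  have h1 := hb i (by omega)
  have h2 := hb (i + (m - b)) (by omega)
  have : m - b + (i + (m - b)) = m - (2 * b - m) + i := by omega
  rw [h1, show m - b + i = i + (m - b) by omega, h2, this]

/-- landing lemma: any nontrivial border yields one of length in `[2, (m+1)/2]`. -/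
lemma Br_land {m : ℕ} {A : ℕ → Bool} :
    ∀ b, Br m b A → 2 ≤ b → b < m → ∃ b', Br m b' A ∧ 2 ≤ b' ∧ 2 * b' ≤ m + 1 ∧ b' < m := by
  intro b
  induction b using Nat.strong_induction_on with
  | _ b ih =>
    intro hb h2 hm
    by_cases hc : 2 * b ≤ m + 1
    · exact ⟨b, hb, h2, hc, hm⟩
    · exact ih (2 * b - m) (by omega) (Br_descent hb (by omega) (by omega)) (by omega) (by omega)


section Transfer

variable {L p : ℕ} {A B : ℕ → Bool}

/-- small borders transfer across insertion/deletion at position `p` -/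
lemma transfer_small (hlt : ∀ i < p, B i = A i) (hge : ∀ i, p ≤ i → i < L → B i = A (i + 1))
    {b : ℕ} (hb1 : b ≤ p) (hb2 : p + b ≤ L) :
    Br (L + 1) b A ↔ Br L b B := by
  unfold Br
  refine forall₂_congr fun i hi => ?_
  rw [hlt i (by omega), hge (L - b + i) (by omega) (by omega),
    show L - b + i + 1 = L + 1 - b + i by omega]

lemma even_k_transfer {k : ℕ} (hk : 3 ≤ k)
    (hlt : ∀ i < k - 1, B i = A i) (hge : ∀ i, k - 1 ≤ i → i < 2 * k - 1 → B i = A (i + 1))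
    (h0 : A 0 = true) (hend : A (2 * k - 1) = true) (hbr : Br (2 * k) k A) :
    Br (2 * k - 1) k B := by
  intro i hi
  rcases Nat.lt_or_ge i (k - 1) with h | h
  · rw [hlt i h, hge (2 * k - 1 - k + i) (by omega) (by omega),
      show 2 * k - 1 - k + i + 1 = k + i by omega]
    have h2 := hbr i (by omega)
    rwa [show 2 * k - k + i = k + i by omega] at h2
  · have hik : i = k - 1 := by omega
    rw [hik]
    rw [hge (k - 1) (le_refl _) (by omega), show k - 1 + 1 = k by omega,
      hge (2 * k - 1 - k + (k - 1)) (by omega) (by omega),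
      show 2 * k - 1 - k + (k - 1) + 1 = 2 * k - 1 by omega, hend]
    have h2 := hbr 0 (by omega)
    rw [Nat.add_zero, show 2 * k - k = k by omega] at h2
    rw [← h2, h0]

lemma delN_lt {p : ℕ} {A : ℕ → Bool} {i : ℕ} (h : i < p) : delN p A i = A i := if_pos h
lemma delN_ge {p : ℕ} {A : ℕ → Bool} {i : ℕ} (h : p ≤ i) : delN p A i = A (i + 1) :=
  if_neg (by omega)
lemma insN_lt {p : ℕ} {c : Bool} {B : ℕ → Bool} {i : ℕ} (h : i < p) : insN p c B i = B i :=
  if_pos h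
lemma insN_eq {p : ℕ} {c : Bool} {B : ℕ → Bool} : insN p c B p = c := by
  unfold insN
  rw [if_neg (by omega), if_pos rfl]
lemma insN_gt {p : ℕ} {c : Bool} {B : ℕ → Bool} {i : ℕ} (h : p < i) :
    insN p c B i = B (i - 1) := by
  unfold insN
  rw [if_neg (by omega), if_neg (by omega)]

lemma del_ins_all (p : ℕ) (c : Bool) (B : ℕ → Bool) : delN p (insN p c B) = B := by
  funext j
  rcases Nat.lt_or_ge j p with h | h
  · rw [delN_lt h, insN_lt h]
  · rw [delN_ge h, insN_gt (by omega), Nat.add_sub_cancel]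

lemma ins_del_ext {p L : ℕ} (f g : ℕ → Bool) (hg : ∀ j < L, g j = delN p f j)
    (hp : p < L + 1) : ∀ i < L + 1, insN p (f p) g i = f i := by
  intro i hi
  rcases Nat.lt_trichotomy i p with h | h | h
  · rw [insN_lt h, hg i (by omega), delN_lt h]
  · rw [h, insN_eq]
  · rw [insN_gt h, hg (i - 1) (by omega), delN_ge (by omega), show i - 1 + 1 = i by omega]

lemma del_ins_ext {p L : ℕ} (c : Bool) (f g : ℕ → Bool) (hg : ∀ j < L + 1, g j = insN p c f j)
    (hp : p ≤ L) : ∀ i < L, delN p g i = f i := by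
  intro i hi
  rcases Nat.lt_or_ge i p with h | h
  · rw [delN_lt h, hg i (by omega), insN_lt h]
  · rw [delN_ge h, hg (i + 1) (by omega), insN_gt (by omega), Nat.add_sub_cancel]

end Transfer


section Translate

variable {m : ℕ}

instance {m b : ℕ} {A : ℕ → Bool} : Decidable (Br m b A) := by unfold Br; infer_instance

lemma ext_lt {A : Fin m → Bool} {t : ℕ} (ht : t < m) : ext A t = A ⟨t, ht⟩ := dif_pos ht

lemma endpt_iff (A : Fin m → Bool) {t : ℕ} (ht : t < m) (b : Bool) :
    (∀ i : Fin m, (i : ℕ) = t → A i = b) ↔ ext A t = b := by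
  rw [ext_lt ht]
  constructor
  · exact fun H => H _ rfl
  · intro H i hi
    have : i = ⟨t, ht⟩ := Fin.ext hi
    rwa [this]

lemma match_iff_br (A : Fin m → Bool) (i : Fin m) :
    (∀ j : Fin m, (i : ℕ) + (j : ℕ) < m → A (i + j) = A j) ↔ Br m (m - (i : ℕ)) (ext A) := by
  have him : (i : ℕ) < m := i.isLt
  unfold Br
  constructor
  · intro H t ht
    have htm : t < m := by omega
    have h2 : (i : ℕ) + t < m := by omega
    have h3 := H ⟨t, htm⟩ (by simpa using h2)
    have e2 : i + (⟨t, htm⟩ : Fin m) = ⟨(i : ℕ) + t, h2⟩ := by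
      apply Fin.ext
      simp [Fin.add_def, Nat.mod_eq_of_lt h2]
    rw [e2] at h3
    rw [show m - (m - (i:ℕ)) + t = (i:ℕ) + t by omega, ext_lt htm, ext_lt h2]
    exact h3.symm
  · intro H j hj
    have ht : (j : ℕ) < m - (i : ℕ) := by omega
    have h3 := H (j : ℕ) ht
    rw [ext_lt (show (j:ℕ) < m from j.isLt), show m - (m - (i:ℕ)) + (j:ℕ) = (i:ℕ) + (j:ℕ) by omega,
      ext_lt hj] at h3
    have e2 : i + j = ⟨(i : ℕ) + (j : ℕ), hj⟩ := by
      apply Fin.ext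
      simp [Fin.add_def, Nat.mod_eq_of_lt hj]
    rw [e2, ← h3]

lemma conway_eq_sum (A : Fin m → Bool) :
    conway A A = ∑ i : Fin m,
      if Br m (m - (i : ℕ)) (ext A) then 2 ^ (m - 1 - (i : ℕ)) else 0 := by
  unfold conway
  refine Finset.sum_congr rfl fun i _ => ?_
  exact if_congr (match_iff_br A i) rfl rfl

lemma br_zero (A : Fin m → Bool) : Br m (m - 0) (ext A) := by
  intro t ht
  rw [show m - (m - 0) + t = t by omega]

lemma br_one (hm : 3 ≤ m) (A : Fin m → Bool) (hA : EndP m (ext A)) : Br m 1 (ext A) := by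
  intro t ht
  interval_cases t
  rw [show m - 1 + 0 = m - 1 by omega, hA.1, hA.2.2.2]

lemma conway_lower (hm : 3 ≤ m) (A : Fin m → Bool) {b : ℕ} (hb2 : 2 ≤ b) (hbm : b < m)
    (hbr : Br m b (ext A)) : 2 ^ (m - 1) + 2 ^ (b - 1) ≤ conway A A := by
  rw [conway_eq_sum]
  have hne : (⟨0, by omega⟩ : Fin m) ≠ ⟨m - b, by omega⟩ := by
    intro h
    rw [Fin.ext_iff] at h
    simp at h
    omega
  calc 2 ^ (m - 1) + 2 ^ (b - 1)
      = ∑ i ∈ ({⟨0, by omega⟩, ⟨m - b, by omega⟩} : Finset (Fin m)),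
        (if Br m (m - (i : ℕ)) (ext A) then 2 ^ (m - 1 - (i : ℕ)) else 0) := by
        rw [Finset.sum_pair hne]
        have t0 : (if Br m (m - (((⟨0, by omega⟩ : Fin m)) : ℕ)) (ext A)
            then 2 ^ (m - 1 - (((⟨0, by omega⟩ : Fin m)) : ℕ)) else 0) = 2 ^ (m - 1) := by
          rw [show (((⟨0, by omega⟩ : Fin m)) : ℕ) = 0 from rfl, if_pos (br_zero A), Nat.sub_zero]
        have t1 : (if Br m (m - (((⟨m - b, by omega⟩ : Fin m)) : ℕ)) (ext A)
            then 2 ^ (m - 1 - (((⟨m - b, by omega⟩ : Fin m)) : ℕ)) else 0) = 2 ^ (b - 1) := by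
          rw [show (((⟨m - b, by omega⟩ : Fin m)) : ℕ) = m - b from rfl,
            show m - (m - b) = b by omega, if_pos hbr, show m - 1 - (m - b) = b - 1 by omega]
        rw [t0, t1]
    _ ≤ ∑ i : Fin m, (if Br m (m - (i : ℕ)) (ext A) then 2 ^ (m - 1 - (i : ℕ)) else 0) :=
        Finset.sum_le_sum_of_subset (Finset.subset_univ _)

lemma conway_value (hm : 3 ≤ m) (A : Fin m → Bool) (hA : EndP m (ext A))
    (hnb : ∀ b, 2 ≤ b → b < m → ¬ Br m b (ext A)) : conway A A = 2 ^ (m - 1) + 1 := by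
  rw [conway_eq_sum]
  have hne : (⟨0, by omega⟩ : Fin m) ≠ ⟨m - 1, by omega⟩ := by
    intro h
    rw [Fin.ext_iff] at h
    simp at h
    omega
  rw [← Finset.sum_subset (Finset.subset_univ ({⟨0, by omega⟩, ⟨m - 1, by omega⟩} : Finset (Fin m)))
    (fun x _ hx => ?_), Finset.sum_pair hne]
  · rw [show (((⟨0, by omega⟩ : Fin m)) : ℕ) = 0 from rfl, if_pos (br_zero A), Nat.sub_zero,
      show (((⟨m - 1, by omega⟩ : Fin m)) : ℕ) = m - 1 from rfl, show m - (m - 1) = 1 by omega,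
      if_pos (br_one hm A hA), show m - 1 - (m - 1) = 0 by omega, pow_zero]
  · simp only [Finset.mem_insert, Finset.mem_singleton] at hx
    push_neg at hx
    obtain ⟨hx0, hx1⟩ := hx
    have hx0' : (x : ℕ) ≠ 0 := fun h => hx0 (Fin.ext h)
    have hx1' : (x : ℕ) ≠ m - 1 := fun h => hx1 (Fin.ext h)
    have hxm := x.isLt
    refine if_neg (hnb (m - (x : ℕ)) (by omega) (by omega))

lemma cstar_predicate_iff (hm : 3 ≤ m) (A : Fin m → Bool) :
    ((∀ i : Fin m, (i : ℕ) = 0 → A i = true) ∧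
    (∀ i : Fin m, (i : ℕ) = 1 → A i = false) ∧
    (∀ i : Fin m, (i : ℕ) = m - 2 → A i = false) ∧
    (∀ i : Fin m, (i : ℕ) = m - 1 → A i = true) ∧
    conway A A = 2 ^ (m - 1) + 1) ↔ Good m (ext A) := by
  rw [endpt_iff A (by omega : (0:ℕ) < m), endpt_iff A (by omega : (1:ℕ) < m),
    endpt_iff A (by omega : m - 2 < m), endpt_iff A (by omega : m - 1 < m)]
  unfold Good EndP
  constructor
  · rintro ⟨h0, h1, h2, h3, hc⟩
    refine ⟨⟨h0, h1, h2, h3⟩, ?_⟩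
    intro b hb2 hbm hbr
    have := conway_lower hm A hb2 hbm hbr
    have h4 : 2 ≤ 2 ^ (b - 1) := by
      calc 2 = 2 ^ 1 := rfl
      _ ≤ 2 ^ (b - 1) := Nat.pow_le_pow_right (by omega) (by omega)
    omega
  · rintro ⟨⟨h0, h1, h2, h3⟩, hnb⟩
    exact ⟨h0, h1, h2, h3, conway_value hm A ⟨h0, h1, h2, h3⟩ hnb⟩

lemma cstar_eq (hm : 3 ≤ m) : cstar m = Nat.card {A : Fin m → Bool // Good m (ext A)} := by
  rw [cstar, ← Nat.card_eq_fintype_card]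
  exact Nat.card_congr (Equiv.subtypeEquivRight fun A => cstar_predicate_iff hm A)

end Translate


section OddCase

variable {k : ℕ}

/-- strings of length `2k-1` with endpoints ok and no small borders (length in `[2,k-1]`) -/
def PX (k : ℕ) (A : ℕ → Bool) : Prop :=
  EndP (2 * k - 1) A ∧ ∀ b, 2 ≤ b → b ≤ k - 1 → ¬ Br (2 * k - 1) b A

/-- the square construction: `w` overlapped with itself at one character -/
def sqN (k : ℕ) (w : ℕ → Bool) : ℕ → Bool :=
  fun i => if i ≤ k - 1 then w i else w (i - (k - 1))

lemma PX_congr (hk : 3 ≤ k) {A A' : ℕ → Bool} (h : ∀ i < 2 * k - 1, A i = A' i) :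
    PX k A ↔ PX k A' := by
  unfold PX
  rw [EndP_congr (by omega) h]
  exact and_congr_right fun _ =>
    forall₃_congr fun b h2 hb => not_congr (Br_congr (by omega) h)

lemma odd_del_good (hk : 3 ≤ k) {A : ℕ → Bool} (hA : PX k A) :
    Good (2 * k - 2) (delN (k - 1) A) := by
  obtain ⟨⟨h0, h1, h2, h3⟩, hnb⟩ := hA
  have hlt : ∀ i < k - 1, delN (k - 1) A i = A i := fun i hi => delN_lt hi
  have hge : ∀ i, k - 1 ≤ i → i < 2 * k - 2 → delN (k - 1) A i = A (i + 1) :=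
    fun i hi _ => delN_ge hi
  refine ⟨⟨?_, ?_, ?_, ?_⟩, ?_⟩
  · rw [delN_lt (by omega)]; exact h0
  · rw [delN_lt (by omega)]; exact h1
  · rw [show 2 * k - 2 - 2 = 2 * k - 4 by omega, delN_ge (by omega),
      show 2 * k - 4 + 1 = 2 * k - 1 - 2 by omega]; exact h2
  · rw [show 2 * k - 2 - 1 = 2 * k - 3 by omega, delN_ge (by omega),
      show 2 * k - 3 + 1 = 2 * k - 1 - 1 by omega]; exact h3
  · intro b hb2 hbm hbr
    obtain ⟨b', hbr', h2', hle', hlt'⟩ := Br_land b hbr hb2 hbm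
    have hB : Br (2 * k - 2 + 1) b' A := by
      rw [transfer_small (L := 2 * k - 2) (p := k - 1) hlt hge (by omega) (by omega)]
      exact hbr'
    rw [show 2 * k - 2 + 1 = 2 * k - 1 by omega] at hB
    exact hnb b' h2' (by omega) hB

lemma odd_ins_PX (hk : 3 ≤ k) {B : ℕ → Bool} (hB : Good (2 * k - 2) B) (c : Bool) :
    PX k (insN (k - 1) c B) := by
  obtain ⟨⟨h0, h1, h2, h3⟩, hnb⟩ := hB
  have hlt : ∀ i < k - 1, B i = insN (k - 1) c B i := fun i hi => (insN_lt hi).symm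
  have hge : ∀ i, k - 1 ≤ i → i < 2 * k - 2 → B i = insN (k - 1) c B (i + 1) := by
    intro i hi _
    rw [insN_gt (by omega), Nat.add_sub_cancel]
  refine ⟨⟨?_, ?_, ?_, ?_⟩, ?_⟩
  · rw [insN_lt (by omega)]; exact h0
  · rw [insN_lt (by omega)]; exact h1
  · rw [show 2 * k - 1 - 2 = 2 * k - 3 by omega, insN_gt (by omega),
      show 2 * k - 3 - 1 = 2 * k - 2 - 2 by omega]; exact h2
  · rw [show 2 * k - 1 - 1 = 2 * k - 2 by omega, insN_gt (by omega),
      show 2 * k - 2 - 1 = 2 * k - 2 - 1 by omega]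
    rw [show 2 * k - 2 - 1 = 2 * k - 3 by omega, show (2:ℕ) * k - 3 = 2 * k - 2 - 1 by omega]
    exact h3
  · intro b hb2 hble hbr
    rw [show 2 * k - 1 = 2 * k - 2 + 1 by omega] at hbr
    exact hnb b hb2 (by omega)
      ((transfer_small (L := 2 * k - 2) (p := k - 1) hlt hge (by omega) (by omega)).mp hbr)

lemma PX_good_iff (hk : 3 ≤ k) {A : ℕ → Bool} (hA : PX k A) :
    Good (2 * k - 1) A ↔ ¬ Br (2 * k - 1) k A := by
  constructor
  · exact fun hG => hG.2 k (by omega) (by omega)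
  · intro hnk
    refine ⟨hA.1, ?_⟩
    intro b hb2 hbm hbr
    obtain ⟨b', hbr', h2', hle', hlt'⟩ := Br_land b hbr hb2 hbm
    rcases Nat.lt_or_ge b' k with h | h
    · exact hA.2 b' h2' (by omega) hbr'
    · have : b' = k := by omega
      exact hnk (this ▸ hbr')

lemma good_iff_PX (hk : 3 ≤ k) {A : ℕ → Bool} :
    Good (2 * k - 1) A ↔ PX k A ∧ ¬ Br (2 * k - 1) k A := by
  constructor
  · intro hG
    have hPX : PX k A := ⟨hG.1, fun b hb2 hble => hG.2 b hb2 (by omega)⟩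
    exact ⟨hPX, (PX_good_iff hk hPX).mp hG⟩
  · rintro ⟨hPX, hnk⟩
    exact (PX_good_iff hk hPX).mpr hnk

lemma odd_sq_good (hk : 3 ≤ k) {A : ℕ → Bool} (hA : PX k A) (hbr : Br (2 * k - 1) k A) :
    Good k A := by
  obtain ⟨⟨h0, h1, h2, h3⟩, hnb⟩ := hA
  have hsh : ∀ i < k, A i = A (k - 1 + i) := by
    intro i hi
    have := hbr i hi
    rwa [show 2 * k - 1 - k + i = k - 1 + i by omega] at this
  refine ⟨⟨h0, h1, ?_, ?_⟩, ?_⟩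
  · rw [hsh (k - 2) (by omega), show k - 1 + (k - 2) = 2 * k - 1 - 2 by omega]; exact h2
  · have h4 := hsh 0 (by omega)
    rw [Nat.add_zero] at h4
    rw [← h4]; exact h0
  · intro b hb2 hbk hbrk
    refine hnb b hb2 (by omega) ?_
    intro i hi
    rw [hbrk i hi, hsh (k - b + i) (by omega), show k - 1 + (k - b + i) = 2 * k - 1 - b + i by omega]

lemma odd_sq_back (hk : 3 ≤ k) {w : ℕ → Bool} (hw : Good k w) :
    PX k (sqN k w) ∧ Br (2 * k - 1) k (sqN k w) := by
  obtain ⟨⟨h0, h1, h2, h3⟩, hnb⟩ := hw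
  have hle : ∀ i, i ≤ k - 1 → sqN k w i = w i := fun i hi => if_pos hi
  have hgt : ∀ i, k - 1 < i → sqN k w i = w (i - (k - 1)) := fun i hi => if_neg (by omega)
  have hbr : Br (2 * k - 1) k (sqN k w) := by
    intro i hi
    rw [show 2 * k - 1 - k + i = k - 1 + i by omega]
    rcases Nat.eq_zero_or_pos i with h | h
    · subst h
      rw [Nat.add_zero, hle 0 (by omega), hle (k - 1) (le_refl _), h0, h3]
    · rw [hle i (by omega), hgt (k - 1 + i) (by omega), show k - 1 + i - (k - 1) = i by omega]
  refine ⟨⟨⟨?_, ?_, ?_, ?_⟩, ?_⟩, hbr⟩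
  · rw [hle 0 (by omega)]; exact h0
  · rw [hle 1 (by omega)]; exact h1
  · rw [show 2 * k - 1 - 2 = 2 * k - 3 by omega, hgt (2 * k - 3) (by omega),
      show 2 * k - 3 - (k - 1) = k - 2 by omega]; exact h2
  · rw [show 2 * k - 1 - 1 = 2 * k - 2 by omega, hgt (2 * k - 2) (by omega),
      show 2 * k - 2 - (k - 1) = k - 1 by omega]; exact h3
  · intro b hb2 hble hbrb
    refine hnb b hb2 (by omega) ?_
    intro i hi
    have := hbrb i hi
    rwa [hle i (by omega), hgt (2 * k - 1 - b + i) (by omega),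
      show 2 * k - 1 - b + i - (k - 1) = k - b + i by omega] at this

end OddCase


section EvenCase

variable {k : ℕ}

/-- the deleted string has the half-length border -/
def QB (k : ℕ) (A : ℕ → Bool) : Prop := Br (2 * k - 1) k (delN (k - 1) A)

/-- the exceptional even-length strings: `w`, the letter `T`, then `w` again -/
def esq (k : ℕ) (w : ℕ → Bool) : ℕ → Bool :=
  fun i => if i = k - 1 then false else if i < k then w i else w (i - k)

lemma QB_congr (hk : 3 ≤ k) {A A' : ℕ → Bool} (h : ∀ i < 2 * k, A i = A' i) :
    QB k A ↔ QB k A' := by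
  unfold QB
  refine Br_congr (by omega) ?_
  intro i hi
  rcases Nat.lt_or_ge i (k - 1) with hc | hc
  · rw [delN_lt hc, delN_lt hc, h i (by omega)]
  · rw [delN_ge hc, delN_ge hc, h (i + 1) (by omega)]

lemma even_del_good (hk : 3 ≤ k) {A : ℕ → Bool} (hA : Good (2 * k) A) (hQ : ¬ QB k A) :
    Good (2 * k - 1) (delN (k - 1) A) := by
  obtain ⟨⟨h0, h1, h2, h3⟩, hnb⟩ := hA
  have hlt : ∀ i < k - 1, delN (k - 1) A i = A i := fun i hi => delN_lt hi
  have hge : ∀ i, k - 1 ≤ i → i < 2 * k - 1 → delN (k - 1) A i = A (i + 1) :=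
    fun i hi _ => delN_ge hi
  refine ⟨⟨?_, ?_, ?_, ?_⟩, ?_⟩
  · rw [delN_lt (by omega)]; exact h0
  · rw [delN_lt (by omega)]; exact h1
  · rw [show 2 * k - 1 - 2 = 2 * k - 3 by omega, delN_ge (by omega),
      show 2 * k - 3 + 1 = 2 * k - 2 by omega, show (2:ℕ) * k - 2 = 2 * k - 2 by omega]
    rw [show (2:ℕ) * k - 2 = 2 * k - 2 by omega] at h2
    exact h2
  · rw [show 2 * k - 1 - 1 = 2 * k - 2 by omega, delN_ge (by omega),
      show 2 * k - 2 + 1 = 2 * k - 1 by omega]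
    rw [show (2:ℕ) * k - 1 = 2 * k - 1 by omega] at h3
    exact h3
  · intro b hb2 hbm hbr
    obtain ⟨b', hbr', h2', hle', hlt'⟩ := Br_land b hbr hb2 hbm
    rcases Nat.lt_or_ge b' k with h | h
    · have hB : Br (2 * k - 1 + 1) b' A := by
        rw [transfer_small (L := 2 * k - 1) (p := k - 1) hlt hge (by omega) (by omega)]
        exact hbr'
      rw [show 2 * k - 1 + 1 = 2 * k by omega] at hB
      exact hnb b' h2' (by omega) hB
    · have : b' = k := by omega
      exact hQ (this ▸ hbr')

lemma even_ins_good (hk : 3 ≤ k) {B : ℕ → Bool} (hB : Good (2 * k - 1) B) (c : Bool) :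
    Good (2 * k) (insN (k - 1) c B) ∧ ¬ QB k (insN (k - 1) c B) := by
  obtain ⟨⟨h0, h1, h2, h3⟩, hnb⟩ := hB
  have hlt : ∀ i < k - 1, B i = insN (k - 1) c B i := fun i hi => (insN_lt hi).symm
  have hge : ∀ i, k - 1 ≤ i → i < 2 * k - 1 → B i = insN (k - 1) c B (i + 1) := by
    intro i hi _
    rw [insN_gt (by omega), Nat.add_sub_cancel]
  have hQn : ¬ QB k (insN (k - 1) c B) := by
    unfold QB
    rw [del_ins_all]
    exact fun hbr => hnb k (by omega) (by omega) hbr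
  have hA0 : insN (k - 1) c B 0 = true := by rw [insN_lt (by omega)]; exact h0
  have hAe : insN (k - 1) c B (2 * k - 1) = true := by
    rw [insN_gt (by omega), show 2 * k - 1 - 1 = 2 * k - 1 - 1 by omega]
    rw [show 2 * k - 1 - 1 = 2 * k - 2 by omega, show (2:ℕ) * k - 2 = 2 * k - 1 - 1 by omega]
    exact h3
  refine ⟨⟨⟨hA0, ?_, ?_, hAe⟩, ?_⟩, hQn⟩
  · rw [insN_lt (by omega)]; exact h1
  · rw [show 2 * k - 2 = 2 * k - 2 by omega, insN_gt (by omega),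
      show 2 * k - 2 - 1 = 2 * k - 3 by omega, show (2:ℕ) * k - 3 = 2 * k - 1 - 2 by omega]
    exact h2
  · intro b hb2 hbm hbr
    obtain ⟨b', hbr', h2', hle', hlt'⟩ := Br_land b hbr hb2 hbm
    rcases Nat.lt_or_ge b' k with h | h
    · rw [show 2 * k = 2 * k - 1 + 1 by omega] at hbr'
      exact hnb b' h2' (by omega)
        ((transfer_small (L := 2 * k - 1) (p := k - 1) hlt hge (by omega) (by omega)).mp hbr')
    · have hbk : b' = k := by omega
      rw [hbk] at hbr'
      refine hnb k (by omega) (by omega) ?_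
      exact even_k_transfer hk (fun i hi => (hlt i hi))
        (fun i hi1 hi2 => hge i hi1 hi2) hA0 hAe hbr'

lemma even_sq (hk : 3 ≤ k) {A : ℕ → Bool} (hA : Good (2 * k) A) (hQ : QB k A) :
    (∀ i ≤ k - 2, A i = A (k + i)) ∧ A (k - 1) = false ∧ Good k (fun i => A (k + i)) := by
  obtain ⟨⟨h0, h1, h2, h3⟩, hnb⟩ := hA
  have hstar : ∀ i ≤ k - 2, A i = A (k + i) := by
    intro i hi
    have := hQ i (by omega)
    rwa [delN_lt (by omega), show 2 * k - 1 - k + i = k - 1 + i by omega,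
      delN_ge (by omega), show k - 1 + i + 1 = k + i by omega] at this
  have hmid : A (k - 1) = false := by
    by_contra hc
    have hc' : A (k - 1) = true := by
      cases hmm : A (k - 1)
      · exact absurd hmm hc
      · rfl
    refine hnb k (by omega) (by omega) ?_
    intro i hi
    rw [show 2 * k - k + i = k + i by omega]
    rcases Nat.lt_or_ge i (k - 1) with h | h
    · exact hstar i (by omega)
    · have : i = k - 1 := by omega
      subst this
      rw [hc', show k + (k - 1) = 2 * k - 1 by omega]
      rw [show (2:ℕ) * k - 1 = 2 * k - 1 by omega] at h3
      exact h3.symm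
  refine ⟨hstar, hmid, ⟨⟨?_, ?_, ?_, ?_⟩, ?_⟩⟩
  · show A (k + 0) = true
    rw [← hstar 0 (by omega)]; exact h0
  · show A (k + 1) = false
    rw [← hstar 1 (by omega)]; exact h1
  · show A (k + (k - 2)) = false
    rw [show k + (k - 2) = 2 * k - 2 by omega]; exact h2
  · show A (k + (k - 1)) = true
    rw [show k + (k - 1) = 2 * k - 1 by omega]; exact h3
  · intro b hb2 hbk hbr
    refine hnb b hb2 (by omega) ?_
    intro i hi
    have h5 : A (k + i) = A (k + (k - b + i)) := hbr i hi
    rw [show k + (k - b + i) = 2 * k - b + i by omega] at h5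
    rw [hstar i (by omega)]
    exact h5

lemma even_sq_back (hk : 3 ≤ k) {w : ℕ → Bool} (hw : Good k w) :
    Good (2 * k) (esq k w) ∧ QB k (esq k w) := by
  obtain ⟨⟨h0, h1, h2, h3⟩, hnb⟩ := hw
  have hsm : ∀ i, i < k → i ≠ k - 1 → esq k w i = w i := by
    intro i hi hne
    unfold esq
    rw [if_neg hne, if_pos hi]
  have hmid : esq k w (k - 1) = false := by
    unfold esq
    rw [if_pos rfl]
  have hbig : ∀ i, k ≤ i → esq k w i = w (i - k) := by
    intro i hi
    unfold esq
    rw [if_neg (by omega), if_neg (by omega)]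
  have hQ : QB k (esq k w) := by
    intro i hi
    rw [show 2 * k - 1 - k + i = k - 1 + i by omega]
    rcases Nat.lt_or_ge i (k - 1) with h | h
    · rw [delN_lt (by omega), delN_ge (by omega), show k - 1 + i + 1 = k + i by omega,
        hsm i (by omega) (by omega), hbig (k + i) (by omega), Nat.add_sub_cancel_left]
    · have hik : i = k - 1 := by omega
      subst hik
      rw [delN_ge (by omega), delN_ge (by omega), show k - 1 + 1 = k by omega,
        show k - 1 + (k - 1) + 1 = 2 * k - 1 by omega,
        hbig k (le_refl _), hbig (2 * k - 1) (by omega), Nat.sub_self,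
        show 2 * k - 1 - k = k - 1 by omega, h0, h3]
  refine ⟨⟨⟨?_, ?_, ?_, ?_⟩, ?_⟩, hQ⟩
  · rw [hsm 0 (by omega) (by omega)]; exact h0
  · rw [hsm 1 (by omega) (by omega)]; exact h1
  · rw [show (2:ℕ) * k - 2 = 2 * k - 2 by omega, hbig (2 * k - 2) (by omega),
      show 2 * k - 2 - k = k - 2 by omega]; exact h2
  · rw [show (2:ℕ) * k - 1 = 2 * k - 1 by omega, hbig (2 * k - 1) (by omega),
      show 2 * k - 1 - k = k - 1 by omega]; exact h3
  · intro b hb2 hbm hbr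
    obtain ⟨b', hbr', h2', hle', hlt'⟩ := Br_land b hbr hb2 hbm
    rcases Nat.lt_or_ge b' k with h | h
    · refine hnb b' h2' (by omega) ?_
      intro i hi
      have h5 := hbr' i hi
      rwa [hsm i (by omega) (by omega), show 2 * k - b' + i = k + (k - b' + i) by omega,
        hbig (k + (k - b' + i)) (by omega), Nat.add_sub_cancel_left] at h5
    · have hbk : b' = k := by omega
      rw [hbk] at hbr'
      have h5 := hbr' (k - 1) (by omega)
      rw [hmid, show 2 * k - k + (k - 1) = 2 * k - 1 by omega,
        hbig (2 * k - 1) (by omega), show 2 * k - 1 - k = k - 1 by omega, h3] at h5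
      exact Bool.noConfusion h5

end EvenCase


section Counting

open Classical in
lemma card_split {α : Type*} [Finite α] (p q : α → Prop) :
    Nat.card {x // p x} = Nat.card {x // p x ∧ q x} + Nat.card {x // p x ∧ ¬ q x} := by
  classical
  have e : ({x // p x ∧ q x} ⊕ {x // p x ∧ ¬ q x}) ≃ {x // p x} :=
    ((Equiv.subtypeSubtypeEquivSubtypeInter p q).symm.sumCongr
      (Equiv.subtypeSubtypeEquivSubtypeInter p (fun x => ¬ q x)).symm).trans
      (Equiv.sumCompl fun x : {x // p x} => q x.1)
  rw [← Nat.card_congr e, Nat.card_sum]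

lemma ext_rst (m : ℕ) (f : ℕ → Bool) : ∀ j < m, ext (fun i : Fin m => f i.val) j = f j :=
  fun j hj => by rw [ext_lt hj]

variable {k : ℕ}

lemma sqN_le {w : ℕ → Bool} {i : ℕ} (h : i ≤ k - 1) : sqN k w i = w i := if_pos h
lemma sqN_gt {w : ℕ → Bool} {i : ℕ} (h : k - 1 < i) : sqN k w i = w (i - (k - 1)) :=
  if_neg (by omega)

lemma esq_mid {w : ℕ → Bool} : esq k w (k - 1) = false := if_pos rfl
lemma esq_sm {w : ℕ → Bool} {i : ℕ} (h1 : i < k) (h2 : i ≠ k - 1) : esq k w i = w i := by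
  unfold esq
  rw [if_neg h2, if_pos h1]
lemma esq_big {w : ℕ → Bool} {i : ℕ} (h : k ≤ i) (hk : 2 ≤ k) : esq k w i = w (i - k) := by
  unfold esq
  rw [if_neg (by omega), if_neg (by omega)]

/-- the insertion/deletion bijection, odd case -/
noncomputable def O1 (hk : 3 ≤ k) : {A : Fin (2 * k - 1) → Bool // PX k (ext A)} ≃
    ({B : Fin (2 * k - 2) → Bool // Good (2 * k - 2) (ext B)} × Bool) where
  toFun A := (⟨fun i => delN (k - 1) (ext A.1) i.val,
      (Good_congr (by omega) (ext_rst (2 * k - 2) _)).mpr (odd_del_good hk A.2)⟩,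
    ext A.1 (k - 1))
  invFun Bc := ⟨fun i => insN (k - 1) Bc.2 (ext Bc.1.1) i.val,
      (PX_congr hk (ext_rst (2 * k - 1) _)).mpr (odd_ins_PX hk Bc.1.2 Bc.2)⟩
  left_inv A := by
    apply Subtype.ext
    funext i
    have h := ins_del_ext (p := k - 1) (L := 2 * k - 2) (ext A.1)
      (ext (fun j : Fin (2 * k - 2) => delN (k - 1) (ext A.1) j.val))
      (fun j hj => ext_rst _ _ j hj) (by omega) i.val (by omega)
    exact h.trans (ext_lt i.isLt)
  right_inv Bc := by
    apply Prod.ext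
    · apply Subtype.ext
      funext i
      have h := del_ins_ext (p := k - 1) (L := 2 * k - 2) Bc.2 (ext Bc.1.1)
        (ext (fun j : Fin (2 * k - 1) => insN (k - 1) Bc.2 (ext Bc.1.1) j.val))
        (fun j hj => ext_rst _ _ j (by omega)) (by omega) i.val (by omega)
      exact h.trans (ext_lt i.isLt)
    · show ext (fun j : Fin (2 * k - 1) => insN (k - 1) Bc.2 (ext Bc.1.1) j.val) (k - 1) = Bc.2
      rw [ext_rst _ _ (k - 1) (by omega), insN_eq]

/-- the square bijection, odd case -/
noncomputable def O2 (hk : 3 ≤ k) :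
    {A : Fin (2 * k - 1) → Bool // PX k (ext A) ∧ Br (2 * k - 1) k (ext A)} ≃
    {w : Fin k → Bool // Good k (ext w)} where
  toFun A := ⟨fun i => ext A.1 i.val,
    (Good_congr (by omega) (ext_rst k _)).mpr (odd_sq_good hk A.2.1 A.2.2)⟩
  invFun w := ⟨fun i => sqN k (ext w.1) i.val,
    ⟨(PX_congr hk (ext_rst (2 * k - 1) _)).mpr (odd_sq_back hk w.2).1,
     (Br_congr (by omega) (ext_rst (2 * k - 1) _)).mpr (odd_sq_back hk w.2).2⟩⟩
  left_inv A := by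
    apply Subtype.ext
    funext i
    show sqN k (ext (fun j : Fin k => ext A.1 j.val)) i.val = A.1 i
    rcases le_or_gt i.val (k - 1) with h | h
    · rw [sqN_le h, ext_rst _ _ i.val (by omega), ext_lt i.isLt]
    · rw [sqN_gt h, ext_rst _ _ _ (by omega : i.val - (k - 1) < k)]
      have hb := A.2.2 (i.val - (k - 1)) (by omega)
      rw [show 2 * k - 1 - k + (i.val - (k - 1)) = i.val by omega] at hb
      rw [hb, ext_lt i.isLt]
  right_inv w := by
    apply Subtype.ext
    funext i
    show ext (fun j : Fin (2 * k - 1) => sqN k (ext w.1) j.val) i.val = w.1 i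
    rw [ext_rst _ _ i.val (by omega), sqN_le (by omega : i.val ≤ k - 1), ext_lt i.isLt]

/-- the insertion/deletion bijection, even case -/
noncomputable def E1 (hk : 3 ≤ k) :
    {A : Fin (2 * k) → Bool // Good (2 * k) (ext A) ∧ ¬ QB k (ext A)} ≃
    ({B : Fin (2 * k - 1) → Bool // Good (2 * k - 1) (ext B)} × Bool) where
  toFun A := (⟨fun i => delN (k - 1) (ext A.1) i.val,
      (Good_congr (by omega) (ext_rst (2 * k - 1) _)).mpr (even_del_good hk A.2.1 A.2.2)⟩,
    ext A.1 (k - 1))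
  invFun Bc := ⟨fun i => insN (k - 1) Bc.2 (ext Bc.1.1) i.val, by
    obtain ⟨hg, hq⟩ := even_ins_good hk Bc.1.2 Bc.2
    exact ⟨(Good_congr (by omega) (ext_rst (2 * k) _)).mpr hg,
      fun hcon => hq ((QB_congr hk (ext_rst (2 * k) _)).mp hcon)⟩⟩
  left_inv A := by
    apply Subtype.ext
    funext i
    have h := ins_del_ext (p := k - 1) (L := 2 * k - 1) (ext A.1)
      (ext (fun j : Fin (2 * k - 1) => delN (k - 1) (ext A.1) j.val))
      (fun j hj => ext_rst _ _ j hj) (by omega) i.val (by omega)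
    exact h.trans (ext_lt i.isLt)
  right_inv Bc := by
    apply Prod.ext
    · apply Subtype.ext
      funext i
      have h := del_ins_ext (p := k - 1) (L := 2 * k - 1) Bc.2 (ext Bc.1.1)
        (ext (fun j : Fin (2 * k) => insN (k - 1) Bc.2 (ext Bc.1.1) j.val))
        (fun j hj => ext_rst _ _ j (by omega)) (by omega) i.val (by omega)
      exact h.trans (ext_lt i.isLt)
    · show ext (fun j : Fin (2 * k) => insN (k - 1) Bc.2 (ext Bc.1.1) j.val) (k - 1) = Bc.2
      rw [ext_rst _ _ (k - 1) (by omega), insN_eq]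

/-- the exceptional-string bijection, even case -/
noncomputable def E2 (hk : 3 ≤ k) :
    {A : Fin (2 * k) → Bool // Good (2 * k) (ext A) ∧ QB k (ext A)} ≃
    {w : Fin k → Bool // Good k (ext w)} where
  toFun A := ⟨fun i => ext A.1 (k + i.val),
    (Good_congr (by omega) (ext_rst k (fun j => ext A.1 (k + j)))).mpr
      (even_sq hk A.2.1 A.2.2).2.2⟩
  invFun w := ⟨fun i => esq k (ext w.1) i.val, by
    obtain ⟨hg, hq⟩ := even_sq_back hk w.2
    exact ⟨(Good_congr (by omega) (ext_rst (2 * k) _)).mpr hg,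
      (QB_congr hk (ext_rst (2 * k) _)).mpr hq⟩⟩
  left_inv A := by
    apply Subtype.ext
    funext i
    show esq k (ext (fun j : Fin k => ext A.1 (k + j.val))) i.val = A.1 i
    obtain ⟨hstar, hmid, hgood⟩ := even_sq hk A.2.1 A.2.2
    rcases Nat.lt_or_ge i.val k with h | h
    · rcases eq_or_ne i.val (k - 1) with he | he
      · rw [he, esq_mid]
        have : ext A.1 i.val = false := he ▸ hmid
        rw [ext_lt i.isLt] at this
        exact this.symm
      · rw [esq_sm h he, ext_lt h]
        show ext A.1 (k + i.val) = A.1 i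
        rw [← hstar i.val (by omega), ext_lt i.isLt]
    · rw [esq_big h (by omega), ext_lt (show i.val - k < k by omega)]
      show ext A.1 (k + (i.val - k)) = A.1 i
      rw [show k + (i.val - k) = i.val by omega, ext_lt i.isLt]
  right_inv w := by
    apply Subtype.ext
    funext i
    show ext (fun j : Fin (2 * k) => esq k (ext w.1) j.val) (k + i.val) = w.1 i
    rw [ext_lt (show k + i.val < 2 * k by omega)]
    show esq k (ext w.1) (k + i.val) = w.1 i
    rw [esq_big (by omega) (by omega), Nat.add_sub_cancel_left, ext_lt i.isLt]

lemma odd_identity (hk : 3 ≤ k) : 2 * cstar (2 * k - 2) = cstar (2 * k - 1) + cstar k := by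
  have h1 : Nat.card {A : Fin (2 * k - 1) → Bool // PX k (ext A)} = 2 * cstar (2 * k - 2) := by
    rw [Nat.card_congr (O1 hk), Nat.card_prod, cstar_eq (by omega : 3 ≤ 2 * k - 2)]
    rw [Nat.card_eq_fintype_card (α := Bool), Fintype.card_bool, Nat.mul_comm]
  have h2 : Nat.card {A : Fin (2 * k - 1) → Bool // PX k (ext A)} =
      cstar k + cstar (2 * k - 1) := by
    rw [card_split (fun A : Fin (2 * k - 1) → Bool => PX k (ext A))
      (fun A => Br (2 * k - 1) k (ext A))]
    congr 1
    · rw [Nat.card_congr (O2 hk), cstar_eq (by omega : 3 ≤ k)]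
    · rw [cstar_eq (by omega : 3 ≤ 2 * k - 1)]
      exact Nat.card_congr (Equiv.subtypeEquivRight fun A => (good_iff_PX hk).symm)
  omega

lemma even_identity (hk : 3 ≤ k) : cstar (2 * k) = 2 * cstar (2 * k - 1) + cstar k := by
  have h1 : cstar (2 * k) =
      Nat.card {A : Fin (2 * k) → Bool // Good (2 * k) (ext A) ∧ QB k (ext A)} +
      Nat.card {A : Fin (2 * k) → Bool // Good (2 * k) (ext A) ∧ ¬ QB k (ext A)} := by
    rw [cstar_eq (by omega : 3 ≤ 2 * k)]
    exact card_split (fun A : Fin (2 * k) → Bool => Good (2 * k) (ext A)) (fun A => QB k (ext A))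
  rw [Nat.card_congr (E1 hk), Nat.card_congr (E2 hk), Nat.card_prod,
    Nat.card_eq_fintype_card (α := Bool), Fintype.card_bool] at h1
  rw [← cstar_eq (by omega : 3 ≤ k), ← cstar_eq (by omega : 3 ≤ 2 * k - 1)] at h1
  omega

end Counting

end Csirik

/-- For every integer `n ≥ 6`, `c_n = 2 c_{n-1} - (-1)^n c_{⌊n/2⌋+1}`. -/
theorem cn_recurrence (n : ℕ) (hn : 6 ≤ n) :
    (c n : ℤ) = 2 * (c (n - 1) : ℤ) - (-1) ^ n * (c (n / 2 + 1) : ℤ) := by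
  rcases Nat.even_or_odd n with he | ho
  · have hpow : (-1 : ℤ) ^ n = 1 := he.neg_one_pow
    obtain ⟨k, hk⟩ := he
    have hk3 : 3 ≤ k := by omega
    have hid := Csirik.odd_identity hk3
    have e1 : n - 1 = 2 * k - 1 := by omega
    have e2 : 2 * k - 1 - 1 = 2 * k - 2 := by omega
    have e3 : n / 2 + 1 - 1 = k := by omega
    simp only [c, e1, e2, e3, hpow, one_mul]
    push_cast
    omega
  · have hpow : (-1 : ℤ) ^ n = -1 := ho.neg_one_pow
    obtain ⟨k, hk⟩ := ho
    have hk3 : 3 ≤ k := by omega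
    have hid := Csirik.even_identity hk3
    have e1 : n - 1 = 2 * k := by omega
    have e2 : 2 * k - 1 = 2 * k - 1 := rfl
    have e3 : n / 2 + 1 - 1 = k := by omega
    simp only [c, e1, e3, hpow]
    push_cast
    omega
end

section
/- For every integer m ≥ 2, the numbers c_m^* satisfy c_{2m+1}^* = 2·c_{2m}^* − c_{m+1}^* (equivalently, 2·c_{2m}^* = c_{2m+1}^* + c_{m+1}^*). -/
/-!
Autocorrelation `2^(n-1) + 1` says that an `HT⋯TH` string of length `n` has no period other than
`0` and `n - 1`. Inserting a letter in the middle of such a string of length `2m` gives a string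
of length `2m + 1` with no such period except possibly `m`, and erasing the middle letter undoes
this: periods `s ≥ m` of the short string are the periods `s + 1` of the long one, and a shorter
period has a multiple in that range. The long strings without period `m` are those counted by
`c*_{2m+1}`; a long string with period `m` is determined by its prefix of length `m + 1`, and these
prefixes are exactly the strings counted by `c*_{m+1}`.
-/

namespace PenneyAnte

section Periods

variable {α : Type*} {n n' m p q : ℕ} {f g : ℕ → α}

def IsPeriod (n : ℕ) (f : ℕ → α) (p : ℕ) : Prop := ∀ j, p + j < n → f (p + j) = f j

theorem isPeriod_zero : IsPeriod n f 0 := fun j _ => by rw [Nat.zero_add]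

theorem isPeriod_congr (h : ∀ k < n, f k = g k) : IsPeriod n f p ↔ IsPeriod n g p :=
  forall_congr' fun j => imp_congr_right fun hj => by
    rw [h _ hj, h _ (by omega)]

theorem isPeriod_sub_one_iff (hn : 0 < n) : IsPeriod n f (n - 1) ↔ f (n - 1) = f 0 := by
  refine ⟨fun h => h 0 (by omega), fun h j hj => ?_⟩
  obtain rfl : j = 0 := by omega
  exact h

namespace IsPeriod

theorem mono (h : IsPeriod n f p) (hn : n' ≤ n) : IsPeriod n' f p :=
  fun j hj => h j (by omega)

theorem add (hq : IsPeriod n f q) (hp : IsPeriod (n - q) f p) : IsPeriod n f (q + p) :=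
  fun j hj => by rw [Nat.add_assoc, hq _ (by omega), hp _ (by omega)]

theorem of_add (hq : IsPeriod n f q) (h : IsPeriod n f (q + p)) : IsPeriod (n - q) f p :=
  fun j hj => by rw [← hq _ (by omega), ← Nat.add_assoc, h _ (by omega)]

theorem mul (h : IsPeriod n f p) (t : ℕ) : IsPeriod n f (t * p) := by
  induction t with
  | zero => simpa using isPeriod_zero
  | succ t ih => simpa [Nat.succ_mul, Nat.add_comm] using h.add (ih.mono (Nat.sub_le n p))

/-- The witness is the least multiple of `p` that is at least `a`. -/
theorem exists_mem_Ico (h : IsPeriod n f p) (hp : 0 < p) (a : ℕ) :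
    ∃ q, a ≤ q ∧ q < a + p ∧ IsPeriod n f q := by
  refine ⟨(a + p - 1) / p * p, ?_, ?_, h.mul _⟩ <;>
  · have := Nat.div_add_mod (a + p - 1) p
    have := Nat.mod_lt (a + p - 1) hp
    rw [Nat.mul_comm]
    omega

end IsPeriod

def NoInnerPeriod (n : ℕ) (f : ℕ → α) : Prop :=
  ∀ p, 0 < p → p < n - 1 → ¬ IsPeriod n f p

theorem noInnerPeriod_of_forall_le (hmn : 2 * m ≤ n)
    (h : ∀ s, m ≤ s → s < n - 1 → ¬ IsPeriod n f s) : NoInnerPeriod n f := by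
  intro s hs hsn hf
  by_cases hms : m ≤ s
  · exact h s hms hsn hf
  · obtain ⟨s', hms', hs', hf'⟩ := hf.exists_mem_Ico hs m
    exact h s' hms' (by omega) hf'

def NoInnerPeriodExcept (n q : ℕ) (f : ℕ → α) : Prop :=
  ∀ p, 0 < p → p < n - 1 → p ≠ q → ¬ IsPeriod n f p

theorem noInnerPeriod_iff_except (hq : 0 < q) (hqn : q < n - 1) :
    NoInnerPeriod n f ↔ NoInnerPeriodExcept n q f ∧ ¬ IsPeriod n f q := by
  refine ⟨fun h => ⟨fun p hp hpn _ => h p hp hpn, h q hq hqn⟩,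
    fun ⟨h, hnq⟩ p hp hpn => ?_⟩
  rcases eq_or_ne p q with rfl | hpq
  exacts [hnq, h p hp hpn hpq]

end Periods

section InsertErase

variable {α : Type*} {n m s : ℕ}

def insertAt (m : ℕ) (x : α) (f : ℕ → α) : ℕ → α :=
  fun k => if k < m then f k else if k = m then x else f (k - 1)

def eraseAt (m : ℕ) (f : ℕ → α) : ℕ → α := fun k => if k < m then f k else f (k + 1)

theorem eraseAt_of_lt {f : ℕ → α} {k : ℕ} (h : k < m) : eraseAt m f k = f k := if_pos h

theorem eraseAt_of_le {f : ℕ → α} {k : ℕ} (h : m ≤ k) : eraseAt m f k = f (k + 1) :=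
  if_neg (Nat.not_lt.mpr h)

@[simp]
theorem eraseAt_insertAt (x : α) (f : ℕ → α) : eraseAt m (insertAt m x f) = f := by
  funext k
  by_cases h : k < m
  · simp [eraseAt, insertAt, h]
  · simp [eraseAt, insertAt, h, show ¬ k + 1 < m by omega, show k + 1 ≠ m by omega]

theorem insertAt_eraseAt (f : ℕ → α) : insertAt m (f m) (eraseAt m f) = f := by
  funext k
  rcases lt_trichotomy k m with h | rfl | h
  · simp [insertAt, eraseAt, h]
  · simp [insertAt]
  · simp [insertAt, eraseAt, show ¬ k < m by omega, show k ≠ m by omega,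
      show ¬ k - 1 < m by omega, show k - 1 + 1 = k by omega]

def insertAtEquiv (m : ℕ) : (ℕ → α) × α ≃ (ℕ → α) where
  toFun s := insertAt m s.2 s.1
  invFun f := (eraseAt m f, f m)
  left_inv s := by simp [insertAt]
  right_inv := insertAt_eraseAt

theorem isPeriod_eraseAt_iff {B : ℕ → α} (hms : m ≤ s) (hn : n ≤ m + s) :
    IsPeriod n (eraseAt m B) s ↔ IsPeriod (n + 1) B (s + 1) := by
  refine forall_congr' fun j => ?_
  rw [eraseAt_of_le (by omega), show s + 1 + j = s + j + 1 by omega]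
  exact ⟨fun h hj => by rw [h (by omega), eraseAt_of_lt (by omega)],
    fun h hj => by rw [h (by omega), eraseAt_of_lt (by omega)]⟩

/-- Both conditions say that `B` has no period in `(m, 2m)`: a shorter period would have a
multiple there. -/
theorem noInnerPeriod_eraseAt_iff {B : ℕ → α} (hm : 0 < m) :
    NoInnerPeriod (2 * m) (eraseAt m B) ↔ NoInnerPeriodExcept (2 * m + 1) m B := by
  have long_iff : NoInnerPeriod (2 * m) (eraseAt m B) ↔
      ∀ q, m < q → q < 2 * m → ¬ IsPeriod (2 * m + 1) B q := by
    refine ⟨fun h q hmq hq hB => ?_,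
      fun h => noInnerPeriod_of_forall_le le_rfl fun s hms hs hE => ?_⟩
    · refine h (q - 1) (by omega) (by omega) ?_
      rwa [isPeriod_eraseAt_iff (by omega) (by omega), Nat.sub_add_cancel (by omega)]
    · exact h (s + 1) (by omega) (by omega) ((isPeriod_eraseAt_iff hms (by omega)).mp hE)
  rw [long_iff]
  refine ⟨fun h p hp hpm hpne hB => ?_, fun h q hmq hq => h q (by omega) (by omega) (by omega)⟩
  rcases lt_or_gt_of_ne hpne with hlt | hgt
  · obtain ⟨q, hmq, hq, hB'⟩ := hB.exists_mem_Ico hp (m + 1)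
    exact h q (by omega) (by omega) hB'
  · exact h p hgt (by omega) hB

end InsertErase

section Strings

variable {n m : ℕ}

/-- A string of length `n` is stored as a map `ℕ → Bool` that is `true` from `n` on. -/
def IsPadded (n : ℕ) (f : ℕ → Bool) : Prop := ∀ k, n ≤ k → f k = true

theorem IsPadded.ext {f g : ℕ → Bool} (hf : IsPadded n f) (hg : IsPadded n g)
    (h : ∀ k < n, f k = g k) : f = g := by
  funext k
  by_cases hk : k < n
  exacts [h k hk, (hf k (by omega)).trans (hg k (by omega)).symm]

theorem isPadded_eraseAt_iff {B : ℕ → Bool} (hmn : m ≤ n) :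
    IsPadded n (eraseAt m B) ↔ IsPadded (n + 1) B := by
  refine ⟨fun h k hk => ?_, fun h k hk => by rw [eraseAt_of_le (by omega), h _ (by omega)]⟩
  rw [← h (k - 1) (by omega), eraseAt_of_le (by omega), Nat.sub_add_cancel (by omega)]

def pad (n : ℕ) (f : ℕ → Bool) : ℕ → Bool := fun k => if k < n then f k else true

theorem pad_of_lt {f : ℕ → Bool} {k : ℕ} (h : k < n) : pad n f k = f k := if_pos h

theorem isPadded_pad (f : ℕ → Bool) : IsPadded n (pad n f) :=
  fun _ hk => if_neg (Nat.not_lt.mpr hk)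

def HasHTTHEnds (n : ℕ) (f : ℕ → Bool) : Prop :=
  f 0 = true ∧ f 1 = false ∧ f (n - 2) = false ∧ f (n - 1) = true

theorem HasHTTHEnds.last_eq_first {f : ℕ → Bool} (h : HasHTTHEnds n f) : f (n - 1) = f 0 :=
  h.2.2.2.trans h.1.symm

theorem hasHTTHEnds_eraseAt_iff {B : ℕ → Bool} (hm : 2 ≤ m) :
    HasHTTHEnds (2 * m) (eraseAt m B) ↔ HasHTTHEnds (2 * m + 1) B := by
  simp only [HasHTTHEnds, eraseAt_of_lt (show 0 < m by omega),
    eraseAt_of_lt (show 1 < m by omega), eraseAt_of_le (show m ≤ 2 * m - 2 by omega),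
    eraseAt_of_le (show m ≤ 2 * m - 1 by omega),
    show 2 * m - 2 + 1 = 2 * m + 1 - 2 by omega, show 2 * m - 1 + 1 = 2 * m + 1 - 1 by omega]

def CStarString (n : ℕ) : Type :=
  {f : ℕ → Bool // IsPadded n f ∧ HasHTTHEnds n f ∧ NoInnerPeriod n f}

def MidPeriodString (m : ℕ) : Type :=
  {B : ℕ → Bool // IsPadded (2 * m + 1) B ∧ HasHTTHEnds (2 * m + 1) B ∧
    NoInnerPeriodExcept (2 * m + 1) m B}

end Strings

section Double

variable {m k j : ℕ} {B C : ℕ → Bool}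

/-- `C` of length `m + 1` followed by its last `m` letters. -/
def double (m : ℕ) (C : ℕ → Bool) : ℕ → Bool :=
  pad (2 * m + 1) fun k => if k ≤ m then C k else C (k - m)

theorem double_of_le (hk : k ≤ m) : double m C k = C k := by
  simp [double, pad, hk, show k < 2 * m + 1 by omega]

theorem double_add (hj : 0 < j) (hjm : j ≤ m) : double m C (m + j) = C j := by
  simp [double, pad, show m + j < 2 * m + 1 by omega, show ¬ m + j ≤ m by omega]

theorem isPadded_double : IsPadded (2 * m + 1) (double m C) := isPadded_pad _

theorem isPeriod_double (hC : C m = C 0) : IsPeriod (2 * m + 1) (double m C) m := by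
  intro j hj
  rcases Nat.eq_zero_or_pos j with rfl | hj0
  · rw [Nat.add_zero, double_of_le le_rfl, double_of_le (Nat.zero_le m), hC]
  · rw [double_add hj0 (by omega), double_of_le (by omega)]

theorem pad_double (hC : IsPadded (m + 1) C) : pad (m + 1) (double m C) = C :=
  (isPadded_pad _).ext hC fun _ hk => by rw [pad_of_lt hk, double_of_le (by omega)]

theorem double_pad (hB : IsPadded (2 * m + 1) B) (hp : IsPeriod (2 * m + 1) B m) :
    double m (pad (m + 1) B) = B := by
  refine isPadded_double.ext hB fun k hk => ?_
  rcases le_or_gt k m with hkm | hmk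
  · rw [double_of_le hkm, pad_of_lt (by omega)]
  · obtain ⟨j, rfl⟩ : ∃ j, k = m + j := ⟨k - m, by omega⟩
    rw [double_add (by omega) (by omega), pad_of_lt (by omega), hp _ hk]

theorem hasHTTHEnds_double (hm : 2 ≤ m) (hC : HasHTTHEnds (m + 1) C) :
    HasHTTHEnds (2 * m + 1) (double m C) := by
  obtain ⟨h0, h1, h2, h3⟩ := hC
  refine ⟨by rwa [double_of_le (by omega)], by rwa [double_of_le (by omega)], ?_, ?_⟩
  · rwa [show 2 * m + 1 - 2 = m + (m - 1) by omega, double_add (by omega) (by omega),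
      show m - 1 = m + 1 - 2 by omega]
  · rwa [show 2 * m + 1 - 1 = m + m by omega, double_add (by omega) le_rfl]

theorem noInnerPeriodExcept_double (hC0 : C m = C 0) (hC : NoInnerPeriod (m + 1) C) :
    NoInnerPeriodExcept (2 * m + 1) m (double m C) := by
  have agree : ∀ k < m + 1, double m C k = C k := fun k hk => double_of_le (by omega)
  intro p hp hpm hpne hD
  rcases lt_or_gt_of_ne hpne with hlt | hgt
  · exact hC p hp (by omega) ((isPeriod_congr agree).mp (hD.mono (by omega)))
  · have hD' :=
      (isPeriod_double hC0).of_add (p := p - m) (by rwa [Nat.add_sub_cancel' hgt.le])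
    rw [show 2 * m + 1 - m = m + 1 by omega, isPeriod_congr agree] at hD'
    exact hC (p - m) (by omega) (by omega) hD'

theorem hasHTTHEnds_pad (hm : 2 ≤ m) (hB : HasHTTHEnds (2 * m + 1) B)
    (hp : IsPeriod (2 * m + 1) B m) :
    HasHTTHEnds (m + 1) (pad (m + 1) B) := by
  obtain ⟨h0, h1, h2, h3⟩ := hB
  refine ⟨by rwa [pad_of_lt (by omega)], by rwa [pad_of_lt (by omega)], ?_, ?_⟩
  · rwa [pad_of_lt (by omega), ← hp _ (by omega), show m + (m + 1 - 2) = 2 * m + 1 - 2 by omega]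
  · rwa [pad_of_lt (by omega), show m + 1 - 1 = m + 0 by omega, hp _ (by omega)]

theorem noInnerPeriod_pad (hB : NoInnerPeriodExcept (2 * m + 1) m B)
    (hp : IsPeriod (2 * m + 1) B m) : NoInnerPeriod (m + 1) (pad (m + 1) B) := by
  intro p hp0 hpm hC
  rw [isPeriod_congr fun k hk => pad_of_lt hk, show m + 1 = 2 * m + 1 - m by omega] at hC
  exact hB (m + p) (by omega) (by omega) (by omega) (hp.add hC)

end Double

section Conway

variable {n : ℕ}

def ofFin (A : Fin n → Bool) : ℕ → Bool := fun k => if h : k < n then A ⟨k, h⟩ else true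

theorem ofFin_of_lt {A : Fin n → Bool} {k : ℕ} (h : k < n) : ofFin A k = A ⟨k, h⟩ :=
  dif_pos h

theorem isPadded_ofFin (A : Fin n → Bool) : IsPadded n (ofFin A) :=
  fun _ hk => dif_neg (Nat.not_lt.mpr hk)

def paddedEquiv (n : ℕ) : (Fin n → Bool) ≃ {f : ℕ → Bool // IsPadded n f} where
  toFun A := ⟨ofFin A, isPadded_ofFin A⟩
  invFun f i := f.1 i
  left_inv _ := funext fun i => ofFin_of_lt i.isLt
  right_inv f :=
    Subtype.ext <| (isPadded_ofFin (fun i => f.1 i)).ext f.2 fun _ hk => ofFin_of_lt hk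

theorem forall_val_eq_imp_iff_ofFin {A : Fin n → Bool} {d : ℕ} (hd : d < n) (b : Bool) :
    (∀ i : Fin n, (i : ℕ) = d → A i = b) ↔ ofFin A d = b := by
  rw [ofFin_of_lt hd]
  exact ⟨fun h => h _ rfl, fun h i hi => by rwa [show i = ⟨d, hd⟩ from Fin.ext hi]⟩

theorem isPeriod_ofFin_iff (A : Fin n → Bool) (i : Fin n) :
    IsPeriod n (ofFin A) i ↔ ∀ j : Fin n, (i : ℕ) + j < n → A (i + j) = A j := by
  have hadd : ∀ (j : Fin n) (hj : (i : ℕ) + j < n), i + j = ⟨i + j, hj⟩ := fun j hj =>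
    Fin.ext (by rw [Fin.val_add, Nat.mod_eq_of_lt hj])
  refine ⟨fun h j hj => ?_, fun h j hj => ?_⟩
  · have := h j hj
    rwa [ofFin_of_lt hj, ofFin_of_lt j.isLt, ← hadd j hj] at this
  · rw [ofFin_of_lt hj, ofFin_of_lt (by omega), ← h ⟨j, by omega⟩ hj, hadd]

open Classical in
theorem conway_self_eq_sum (A : Fin n → Bool) :
    conway A A =
      ∑ i ∈ Finset.range n, if IsPeriod n (ofFin A) i then 2 ^ (n - 1 - i) else 0 := by
  rw [← Fin.sum_univ_eq_sum_range fun i => if IsPeriod n (ofFin A) i then 2 ^ (n - 1 - i) else 0]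
  exact Finset.sum_congr rfl fun i _ => if_congr (isPeriod_ofFin_iff A i).symm rfl rfl

/-- The periods `0` and `n - 1` contribute `2 ^ (n - 1) + 1`; any other period adds more. -/
theorem conway_self_eq_iff (A : Fin n → Bool) (hn : 2 ≤ n)
    (hA : ofFin A (n - 1) = ofFin A 0) :
    conway A A = 2 ^ (n - 1) + 1 ↔ NoInnerPeriod n (ofFin A) := by
  classical
  obtain ⟨k, rfl⟩ : ∃ k, n = k + 2 := ⟨n - 2, by omega⟩
  have hlast : IsPeriod (k + 2) (ofFin A) (k + 1) := (isPeriod_sub_one_iff (by omega)).mpr hA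
  rw [conway_self_eq_sum, Finset.sum_range_succ, Finset.sum_range_succ', if_pos isPeriod_zero,
    if_pos hlast, show k + 2 - 1 - (k + 1) = 0 by omega, pow_zero, Nat.sub_zero, add_assoc,
    add_eq_right, Finset.sum_eq_zero_iff]
  simp only [Finset.mem_range, ite_eq_right_iff, Nat.pow_eq_zero, OfNat.ofNat_ne_zero, false_and,
    imp_false]
  refine ⟨fun h p hp hpk => ?_, fun h i hi => h (i + 1) (by omega) (by omega)⟩
  obtain ⟨i, rfl⟩ := Nat.exists_eq_add_one_of_ne_zero hp.ne'
  exact h i (by omega)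

theorem cstar_eq_card (hn : 3 ≤ n) : cstar n = Nat.card (CStarString n) := by
  rw [cstar, ← Nat.card_eq_fintype_card]
  refine Nat.card_congr <| (Equiv.subtypeEquiv (paddedEquiv n) fun A => ?_).trans
    (Equiv.subtypeSubtypeEquivSubtypeInter (IsPadded n)
      fun f => HasHTTHEnds n f ∧ NoInnerPeriod n f)
  simp only [forall_val_eq_imp_iff_ofFin (show 0 < n by omega),
    forall_val_eq_imp_iff_ofFin (show 1 < n by omega),
    forall_val_eq_imp_iff_ofFin (show n - 2 < n by omega),
    forall_val_eq_imp_iff_ofFin (show n - 1 < n by omega)]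
  exact ⟨fun ⟨h0, h1, h2, h3, hc⟩ =>
      ⟨⟨h0, h1, h2, h3⟩, (conway_self_eq_iff A (by omega) (h3.trans h0.symm)).mp hc⟩,
    fun ⟨⟨h0, h1, h2, h3⟩, hA⟩ =>
      ⟨h0, h1, h2, h3, (conway_self_eq_iff A (by omega) (h3.trans h0.symm)).mpr hA⟩⟩

end Conway

section Counting

variable {n m : ℕ}

theorem finite_of_isPadded (P : (ℕ → Bool) → Prop) :
    Finite {f : ℕ → Bool // IsPadded n f ∧ P f} :=
  Finite.of_injective (fun f (i : Fin n) => f.1 i) fun f g h =>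
    Subtype.ext (f.2.1.ext g.2.1 fun k hk => congrFun h ⟨k, hk⟩)

instance : Finite (CStarString n) := finite_of_isPadded _

instance : Finite (MidPeriodString m) := finite_of_isPadded _

def insertEquiv (hm : 2 ≤ m) : CStarString (2 * m) × Bool ≃ MidPeriodString m :=
  Equiv.prodSubtypeFstEquivSubtypeProd.symm.trans <|
    Equiv.subtypeEquiv (insertAtEquiv m) fun s => by
      rw [← eraseAt_insertAt (m := m) s.2 s.1]
      exact and_congr (isPadded_eraseAt_iff (by omega)) <|
        and_congr (hasHTTHEnds_eraseAt_iff hm) (noInnerPeriod_eraseAt_iff (by omega))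

def nonperiodicEquiv (hm : 0 < m) :
    {B : MidPeriodString m // ¬ IsPeriod (2 * m + 1) B.1 m} ≃ CStarString (2 * m + 1) where
  toFun B := ⟨B.1.1, B.1.2.1, B.1.2.2.1,
    (noInnerPeriod_iff_except hm (by omega)).mpr ⟨B.1.2.2.2, B.2⟩⟩
  invFun B := ⟨⟨B.1, B.2.1, B.2.2.1, ((noInnerPeriod_iff_except hm (by omega)).mp B.2.2.2).1⟩,
    ((noInnerPeriod_iff_except hm (by omega)).mp B.2.2.2).2⟩
  left_inv _ := rfl
  right_inv _ := rfl

def periodicEquiv (hm : 2 ≤ m) :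
    {B : MidPeriodString m // IsPeriod (2 * m + 1) B.1 m} ≃ CStarString (m + 1) where
  toFun B := ⟨pad (m + 1) B.1.1, isPadded_pad _, hasHTTHEnds_pad hm B.1.2.2.1 B.2,
    noInnerPeriod_pad B.1.2.2.2 B.2⟩
  invFun C := ⟨⟨double m C.1, isPadded_double, hasHTTHEnds_double hm C.2.2.1,
    noInnerPeriodExcept_double C.2.2.1.last_eq_first C.2.2.2⟩,
    isPeriod_double C.2.2.1.last_eq_first⟩
  left_inv B := Subtype.ext (Subtype.ext (double_pad B.1.2.1 B.2))
  right_inv C := Subtype.ext (pad_double C.2.1)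

theorem two_mul_card_cStarString (hm : 2 ≤ m) :
    2 * Nat.card (CStarString (2 * m)) =
      Nat.card (CStarString (2 * m + 1)) + Nat.card (CStarString (m + 1)) := by
  classical
  let p : MidPeriodString m → Prop := fun B => IsPeriod (2 * m + 1) B.1 m
  calc 2 * Nat.card (CStarString (2 * m))
      = Nat.card (MidPeriodString m) := by
        rw [← Nat.card_congr (insertEquiv hm), Nat.card_prod,
          Nat.card_eq_fintype_card (α := Bool), Fintype.card_bool, Nat.mul_comm]
    _ = Nat.card {B // p B} + Nat.card {B // ¬ p B} := by
        rw [← Nat.card_sum, Nat.card_congr (Equiv.sumCompl p)]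
    _ = Nat.card (CStarString (2 * m + 1)) + Nat.card (CStarString (m + 1)) := by
        rw [Nat.card_congr (periodicEquiv hm), Nat.card_congr (nonperiodicEquiv (by omega)),
          Nat.add_comm]

end Counting

end PenneyAnte

/-- For every integer `m ≥ 2`, `c*_{2m+1} = 2 c*_{2m} - c*_{m+1}`. -/
theorem cstar_recurrence_odd (m : ℕ) (hm : 2 ≤ m) :
    (cstar (2 * m + 1) : ℤ) = 2 * (cstar (2 * m) : ℤ) - (cstar (m + 1) : ℤ) := by
  have h := PenneyAnte.two_mul_card_cStarString hm
  rw [← PenneyAnte.cstar_eq_card (by omega), ← PenneyAnte.cstar_eq_card (by omega),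
    ← PenneyAnte.cstar_eq_card (by omega)] at h
  omega
end

section
/- For every integer m ≥ 3, the numbers c_m^* satisfy c_{2m}^* = 2·c_{2m−1}^* + c_m^*. -/
/-!
A string that begins and ends with `H` has autocorrelation `2^(n-1) + 1` exactly
when it has no border (proper prefix that is also a suffix) of length `k` with `2 ≤ k < n`, so
`c*_n` counts the strings of length `n` that begin with `HT`, end with `TH` and have no such border.
A border of length `k` with `2k > n + 1` yields one of length `2k - n ≥ 2`, so it suffices to
exclude the borders of length `k ≤ (n + 1) / 2`.

For a string `F` of length `2m`, deleting the middle letter `F_{m-1}` therefore only affects the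
border of length `m`: the result is counted by `c*_{2m-1}` iff `F` is counted by `c*_{2m}` and is
not of the form `u a u b` with `|u| = m - 1`. Since the deleted letter is arbitrary, this accounts
for `2 c*_{2m-1}` strings. The remaining strings counted by `c*_{2m}` are exactly the `u T u H`
with `u H` counted by `c*_m`.
-/

namespace HeadTail

variable {n m k : ℕ} {f F w : ℕ → Bool}

-- A string of length `n` is a function `ℕ → Bool` of which only the values on `[0, n)` matter.
def HasBorder (n : ℕ) (f : ℕ → Bool) (k : ℕ) : Prop := ∀ j < k, f (n - k + j) = f j

instance : Decidable (HasBorder n f k) := by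
  unfold HasBorder; infer_instance

lemma hasBorder_self (n : ℕ) (f : ℕ → Bool) : HasBorder n f n := by
  intro j _
  rw [Nat.sub_self, zero_add]

lemma HasBorder.two_mul_sub (h : HasBorder n f k) (hk : k ≤ n) : HasBorder n f (2 * k - n) := by
  intro j hj
  rw [show n - (2 * k - n) + j = n - k + (n - k + j) by omega, h _ (by omega), h _ (by omega)]

lemma HasBorder.exists_two_mul_le (h : HasBorder n f k) (hk : 2 ≤ k) (hkn : k < n) :
    ∃ l, 2 ≤ l ∧ 2 * l ≤ n + 1 ∧ HasBorder n f l := by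
  induction k using Nat.strong_induction_on with
  | _ k ih =>
    by_cases hkl : 2 * k ≤ n + 1
    · exact ⟨k, hk, hkl, h⟩
    · exact ih (2 * k - n) (by omega) (h.two_mul_sub hkn.le) (by omega) (by omega)

def BeginsHTEndsTH (n : ℕ) (f : ℕ → Bool) : Prop :=
  f 0 = true ∧ f 1 = false ∧ f (n - 2) = false ∧ f (n - 1) = true

def IsCStar (n : ℕ) (f : ℕ → Bool) : Prop :=
  BeginsHTEndsTH n f ∧ ∀ k, 2 ≤ k → k < n → ¬HasBorder n f k

instance : DecidablePred (IsCStar n) := fun f => by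
  unfold IsCStar BeginsHTEndsTH; infer_instance

lemma BeginsHTEndsTH.three_le (h : BeginsHTEndsTH n f) : 3 ≤ n := by
  by_contra hn
  obtain ⟨h0, -, h2, -⟩ := h
  rw [show n - 2 = 0 by omega, h0] at h2
  exact Bool.noConfusion h2

lemma BeginsHTEndsTH.hasBorder_one (h : BeginsHTEndsTH n f) : HasBorder n f 1 := by
  intro j hj
  obtain rfl : j = 0 := by omega
  rw [Nat.add_zero, h.1, h.2.2.2]

lemma isCStar_iff_two_mul_le :
    IsCStar n f ↔ BeginsHTEndsTH n f ∧ ∀ k, 2 ≤ k → 2 * k ≤ n + 1 → ¬HasBorder n f k := by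
  refine and_congr_right fun _ => ⟨fun h k hk hkn => h k hk (by omega), fun h k hk hkn hb => ?_⟩
  obtain ⟨l, hl, hln, hbl⟩ := hb.exists_two_mul_le hk hkn
  exact h l hl hln hbl

def eraseAt (p : ℕ) (f : ℕ → Bool) (i : ℕ) : Bool := if i < p then f i else f (i + 1)

lemma beginsHTEndsTH_eraseAt_iff {p : ℕ} (hp : 2 ≤ p) (hpn : p + 2 ≤ n) :
    BeginsHTEndsTH n (eraseAt p f) ↔ BeginsHTEndsTH (n + 1) f := by
  simp only [BeginsHTEndsTH, eraseAt, if_pos (show 0 < p by omega), if_pos (show 1 < p by omega),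
    if_neg (show ¬n - 2 < p by omega), if_neg (show ¬n - 1 < p by omega),
    show n - 2 + 1 = n + 1 - 2 by omega, show n - 1 + 1 = n + 1 - 1 by omega]

lemma hasBorder_eraseAt_iff {p : ℕ} (hkp : k ≤ p) (hkn : k + p ≤ n) :
    HasBorder n (eraseAt p f) k ↔ HasBorder (n + 1) f k := by
  refine forall₂_congr fun j hj => ?_
  simp only [eraseAt, if_pos (show j < p by omega), if_neg (show ¬n - k + j < p by omega),
    show n - k + j + 1 = n + 1 - k + j by omega]

/-- `F = u a u b` with `u` of length `m - 1`. -/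
def IsAlmostSquare (m : ℕ) (F : ℕ → Bool) : Prop := ∀ j < m - 1, F (m + j) = F j

instance : DecidablePred (IsAlmostSquare m) := fun F => by
  unfold IsAlmostSquare; infer_instance

lemma hasBorder_half_iff (hn : n + 1 = 2 * m) :
    HasBorder (n + 1) F m ↔ IsAlmostSquare m F ∧ F n = F (m - 1) := by
  constructor
  · intro h
    refine ⟨fun j hj => ?_, ?_⟩
    · rw [← h j (by omega), show n + 1 - m + j = m + j by omega]
    · rw [← h (m - 1) (by omega), show n + 1 - m + (m - 1) = n by omega]
  · rintro ⟨hsq, hlast⟩ j hj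
    rw [show n + 1 - m + j = m + j by omega]
    rcases Nat.lt_or_ge j (m - 1) with hj' | hj'
    · exact hsq j hj'
    · rw [show j = m - 1 by omega, show m + (m - 1) = n by omega, hlast]

lemma hasBorder_eraseAt_half_iff (hm : 2 ≤ m) (hn : n + 1 = 2 * m)
    (hF : BeginsHTEndsTH (n + 1) F) :
    HasBorder n (eraseAt (m - 1) F) m ↔ IsAlmostSquare m F := by
  constructor
  · intro h j hj
    have := h j (by omega)
    simp only [eraseAt, if_pos hj, if_neg (show ¬n - m + j < m - 1 by omega),
      show n - m + j + 1 = m + j by omega] at this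
    exact this
  · intro hsq j hj
    simp only [eraseAt, if_neg (show ¬n - m + j < m - 1 by omega),
      show n - m + j + 1 = m + j by omega]
    rcases Nat.lt_or_ge j (m - 1) with hj' | hj'
    · rw [if_pos hj']
      exact hsq j hj'
    · have hFm : F (m + 0) = F 0 := hsq 0 (by omega)
      rw [if_neg (by omega), show j = m - 1 by omega, show m + (m - 1) = n + 1 - 1 by omega,
        show m - 1 + 1 = m + 0 by omega, hFm, hF.1, hF.2.2.2]

lemma isCStar_eraseAt_iff (hm : 3 ≤ m) (hn : n + 1 = 2 * m) :
    IsCStar n (eraseAt (m - 1) F) ↔ IsCStar (n + 1) F ∧ ¬IsAlmostSquare m F := by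
  have hB : ∀ k < m, HasBorder n (eraseAt (m - 1) F) k ↔ HasBorder (n + 1) F k :=
    fun k hk => hasBorder_eraseAt_iff (by omega) (by omega)
  simp only [isCStar_iff_two_mul_le (n := n), isCStar_iff_two_mul_le (n := n + 1),
    beginsHTEndsTH_eraseAt_iff (show 2 ≤ m - 1 by omega) (show m - 1 + 2 ≤ n by omega)]
  constructor
  · rintro ⟨hF, hG⟩
    have hsq : IsAlmostSquare m F → HasBorder n (eraseAt (m - 1) F) m :=
      (hasBorder_eraseAt_half_iff (by omega) hn hF).2
    refine ⟨⟨hF, fun k hk hkn hb => ?_⟩, fun h => hG m (by omega) (by omega) (hsq h)⟩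
    rcases Nat.lt_or_ge k m with hkm | hkm
    · exact hG k hk (by omega) ((hB k hkm).2 hb)
    · obtain rfl : k = m := by omega
      exact hG k hk (by omega) (hsq ((hasBorder_half_iff hn).1 hb).1)
  · rintro ⟨⟨hF, hFb⟩, hns⟩
    refine ⟨hF, fun k hk hkn hb => ?_⟩
    rcases Nat.lt_or_ge k m with hkm | hkm
    · exact hFb k hk (by omega) ((hB k hkm).1 hb)
    · obtain rfl : k = m := by omega
      exact hns ((hasBorder_eraseAt_half_iff (by omega) hn hF).1 hb)

lemma IsCStar.apply_sub_one_of_isAlmostSquare (hF : IsCStar (n + 1) F) (hm : 2 ≤ m)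
    (hn : n + 1 = 2 * m) (hsq : IsAlmostSquare m F) : F (m - 1) = false := by
  by_contra hmid
  rw [Bool.not_eq_false] at hmid
  have hlast : F n = F (m - 1) := by simpa [hmid] using hF.1.2.2.2
  exact hF.2 m hm (by omega) ((hasBorder_half_iff hn).2 ⟨hsq, hlast⟩)

/-- `double m w = u T w`, where `u` is `w` without its last letter. -/
def double (m : ℕ) (w : ℕ → Bool) (i : ℕ) : Bool :=
  if i < m - 1 then w i else if i = m - 1 then false else w (i - m)

lemma double_apply_sub_one : double m w (m - 1) = false := by
  simp [double]

lemma isAlmostSquare_double : IsAlmostSquare m (double m w) := by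
  intro j hj
  simp only [double, if_pos hj, if_neg (show ¬m + j < m - 1 by omega),
    if_neg (show m + j ≠ m - 1 by omega), Nat.add_sub_cancel_left]

lemma double_shift_eq_self (hsq : IsAlmostSquare m F) (hmid : F (m - 1) = false) :
    double m (fun i => F (m + i)) = F := by
  funext i
  simp only [double]
  split_ifs with h1 h2
  · exact hsq i h1
  · rw [h2, hmid]
  · rw [Nat.add_sub_cancel' (by omega)]

lemma isCStar_double_iff (hm : 3 ≤ m) (hn : n + 1 = 2 * m) :
    IsCStar (n + 1) (double m w) ↔ IsCStar m w := by
  have hH : BeginsHTEndsTH (n + 1) (double m w) ↔ BeginsHTEndsTH m w := by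
    simp only [BeginsHTEndsTH, double, if_pos (show 0 < m - 1 by omega),
      if_pos (show 1 < m - 1 by omega),
      if_neg (show ¬n + 1 - 2 < m - 1 by omega), if_neg (show n + 1 - 2 ≠ m - 1 by omega),
      if_neg (show ¬n + 1 - 1 < m - 1 by omega), if_neg (show n + 1 - 1 ≠ m - 1 by omega),
      show n + 1 - 2 - m = m - 2 by omega, show n + 1 - 1 - m = m - 1 by omega]
  have hB : ∀ k < m, HasBorder (n + 1) (double m w) k ↔ HasBorder m w k := by
    refine fun k hk => forall₂_congr fun j hj => ?_
    simp only [double, if_pos (show j < m - 1 by omega),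
      if_neg (show ¬n + 1 - k + j < m - 1 by omega), if_neg (show n + 1 - k + j ≠ m - 1 by omega),
      show n + 1 - k + j - m = m - k + j by omega]
  rw [isCStar_iff_two_mul_le, hH]
  constructor
  · rintro ⟨hw, hb⟩
    exact ⟨hw, fun k hk hkm hbk => hb k hk (by omega) ((hB k hkm).2 hbk)⟩
  · rintro ⟨hw, hb⟩
    refine ⟨hw, fun k hk hkn hbk => ?_⟩
    rcases Nat.lt_or_ge k m with hkm | hkm
    · exact hb k hk hkm ((hB k hkm).1 hbk)
    · obtain rfl : k = m := by omega
      have hlast : double k w n = w (k - 1) := by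
        simp only [double, if_neg (show ¬n < k - 1 by omega), if_neg (show n ≠ k - 1 by omega),
          show n - k = k - 1 by omega]
      have := ((hasBorder_half_iff hn).1 hbk).2
      rw [hlast, hw.2.2.2, double_apply_sub_one] at this
      exact Bool.noConfusion this

def padded {n : ℕ} (A : Fin n → Bool) (i : ℕ) : Bool := if h : i < n then A ⟨i, h⟩ else false

lemma padded_val (A : Fin n → Bool) (i : Fin n) : padded A i = A i := dif_pos i.isLt

lemma padded_restrict {g : ℕ → Bool} (hg : ∀ i, n ≤ i → g i = false) :
    padded (fun i : Fin n => g i) = g := by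
  funext i
  by_cases hi : i < n
  · exact dif_pos hi
  · exact (dif_neg hi).trans (hg i (by omega)).symm

lemma padded_removeNth (p : Fin (n + 1)) (A : Fin (n + 1) → Bool) :
    padded (p.removeNth A) = eraseAt p (padded A) := by
  funext i
  simp only [padded, eraseAt, Fin.removeNth, Fin.succAbove, Fin.lt_def, Fin.val_castSucc]
  split_ifs <;> first | rfl | omega

lemma forall_val_eq_imp_iff {A : Fin n → Bool} {a : ℕ} (ha : a < n) (b : Bool) :
    (∀ i : Fin n, (i : ℕ) = a → A i = b) ↔ padded A a = b :=
  ⟨fun h => (dif_pos ha).trans (h ⟨a, ha⟩ rfl), fun h i hi => by rw [← padded_val A, hi, h]⟩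

lemma forall_fin_add_imp_iff_hasBorder (A : Fin n → Bool) (i : Fin n) :
    (∀ j : Fin n, (i : ℕ) + j < n → A (i + j) = A j) ↔ HasBorder n (padded A) (n - i) := by
  constructor
  · intro h j hj
    have hij : (i : ℕ) + j < n := by omega
    have := h ⟨j, by omega⟩ hij
    rw [← padded_val A, ← padded_val A, Fin.val_add_eq_of_add_lt hij] at this
    rwa [show n - (n - i) + j = i + j by omega]
  · intro h j hj
    rw [← padded_val A, ← padded_val A, Fin.val_add_eq_of_add_lt hj, ← h j (by omega)]
    congr 1
    omega

open Finset

lemma conway_self_eq_sum (A : Fin n → Bool) :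
    conway A A = ∑ k ∈ range n, if HasBorder n (padded A) (k + 1) then 2 ^ k else 0 := by
  calc conway A A
      = ∑ i : Fin n, if HasBorder n (padded A) (n - i) then 2 ^ (n - 1 - i) else 0 := by
        simp only [conway, forall_fin_add_imp_iff_hasBorder]
    _ = ∑ i ∈ range n, if HasBorder n (padded A) (n - i) then 2 ^ (n - 1 - i) else 0 :=
        Fin.sum_univ_eq_sum_range
          (fun i => if HasBorder n (padded A) (n - i) then 2 ^ (n - 1 - i) else 0) n
    _ = _ := by
        rw [← sum_range_reflect]
        refine sum_congr rfl fun k hk => ?_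
        rw [mem_range] at hk
        rw [show n - (n - 1 - k) = k + 1 by omega, show n - 1 - (n - 1 - k) = k by omega]

lemma conway_self_eq_iff {A : Fin n → Bool} (hA : BeginsHTEndsTH n (padded A)) :
    conway A A = 2 ^ (n - 1) + 1 ↔ ∀ k, 2 ≤ k → k < n → ¬HasBorder n (padded A) k := by
  obtain ⟨l, rfl⟩ : ∃ l, n = l + 2 := ⟨n - 2, by have := hA.three_le; omega⟩
  rw [conway_self_eq_sum, sum_range_succ, sum_range_succ', if_pos (hasBorder_self _ _),
    if_pos hA.hasBorder_one, pow_zero, show l + 2 - 1 = l + 1 by omega,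
    show ∀ s, s + 1 + 2 ^ (l + 1) = 2 ^ (l + 1) + 1 ↔ s = 0 by omega, sum_eq_zero_iff]
  simp only [mem_range, ite_eq_right_iff, pow_ne_zero _ two_ne_zero, imp_false]
  constructor
  · intro h k hk hkn
    simpa [show k - 2 + 1 + 1 = k by omega] using h (k - 2) (by omega)
  · exact fun h k hk => h (k + 1 + 1) (by omega) (by omega)

def cstarStrings (n : ℕ) : Finset (Fin n → Bool) := univ.filter fun A => IsCStar n (padded A)

@[simp]
lemma mem_cstarStrings {A : Fin n → Bool} : A ∈ cstarStrings n ↔ IsCStar n (padded A) := by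
  simp [cstarStrings]

lemma cstar_eq_card (hn : 3 ≤ n) : cstar n = #(cstarStrings n) := by
  rw [cstar, cstarStrings, ← Fintype.card_subtype]
  refine Fintype.card_congr (Equiv.subtypeEquivRight fun A => ?_)
  simp only [forall_val_eq_imp_iff (show 0 < n by omega),
    forall_val_eq_imp_iff (show 1 < n by omega), forall_val_eq_imp_iff (show n - 2 < n by omega),
    forall_val_eq_imp_iff (show n - 1 < n by omega)]
  constructor
  · rintro ⟨h0, h1, h2, h3, hc⟩
    have hA : BeginsHTEndsTH n (padded A) := ⟨h0, h1, h2, h3⟩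
    exact ⟨hA, (conway_self_eq_iff hA).1 hc⟩
  · rintro ⟨hA, hb⟩
    exact ⟨hA.1, hA.2.1, hA.2.2.1, hA.2.2.2, (conway_self_eq_iff hA).2 hb⟩

lemma card_filter_removeNth_mem {α : Type*} [Fintype α] [DecidableEq α] (p : Fin (n + 1))
    {s : Finset (Fin (n + 1) → α)} {t : Finset (Fin n → α)}
    (h : ∀ F : Fin (n + 1) → α, p.removeNth F ∈ t → F ∈ s) :
    #(s.filter fun F : Fin (n + 1) → α => p.removeNth F ∈ t) = Fintype.card α * #t := by
  rw [mul_comm, ← card_univ (α := α), ← card_product]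
  refine card_nbij' (fun F => (p.removeNth F, F p)) (fun x => p.insertNth x.2 x.1) ?_ ?_ ?_ ?_
  · intro F hF
    simp only [coe_filter, Set.mem_ofPred_eq] at hF
    simpa using hF.2
  · rintro ⟨G, a⟩ hG
    simp only [coe_product, Set.mem_prod, mem_coe] at hG
    simpa using ⟨h _ (by simpa using hG.1), hG.1⟩
  · intro F _
    simp
  · rintro ⟨G, a⟩ _
    simp

lemma card_filter_isAlmostSquare (hm : 3 ≤ m) (hn : n + 1 = 2 * m) :
    #((cstarStrings (n + 1)).filter fun F => IsAlmostSquare m (padded F)) =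
      #(cstarStrings m) := by
  have hshift (F : Fin (n + 1) → Bool) :
      padded (fun i : Fin m => padded F (m + i)) = fun i => padded F (m + i) :=
    padded_restrict (g := fun i => padded F (m + i)) fun i hi => dif_neg (by omega)
  have hdouble (w : Fin m → Bool) :
      padded (fun i : Fin (n + 1) => double m (padded w) i) = double m (padded w) :=
    padded_restrict (g := double m (padded w)) fun i hi => by
      simp only [double, if_neg (show ¬i < m - 1 by omega), if_neg (show i ≠ m - 1 by omega)]
      exact dif_neg (by omega)
  have hdouble_shift {F : Fin (n + 1) → Bool} (hF : IsCStar (n + 1) (padded F))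
      (hsq : IsAlmostSquare m (padded F)) : double m (fun i => padded F (m + i)) = padded F :=
    double_shift_eq_self hsq (hF.apply_sub_one_of_isAlmostSquare (by omega) hn hsq)
  refine card_nbij' (fun F i => padded F (m + i)) (fun w i => double m (padded w) i) ?_ ?_ ?_ ?_
  · intro F hF
    simp only [coe_filter, mem_cstarStrings, Set.mem_ofPred_eq, mem_coe] at hF ⊢
    rw [hshift, ← isCStar_double_iff hm hn, hdouble_shift hF.1 hF.2]
    exact hF.1
  · intro w hw
    simp only [coe_filter, mem_cstarStrings, Set.mem_ofPred_eq, mem_coe] at hw ⊢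
    rw [hdouble]
    exact ⟨(isCStar_double_iff hm hn).2 hw, isAlmostSquare_double⟩
  · intro F hF
    simp only [coe_filter, mem_cstarStrings, Set.mem_ofPred_eq] at hF
    funext i
    dsimp only
    rw [hshift, hdouble_shift hF.1 hF.2, padded_val]
  · intro w _
    funext i
    dsimp only
    rw [hdouble, ← padded_val w i]
    simp only [double, if_neg (show ¬m + (i : ℕ) < m - 1 by omega),
      if_neg (show m + (i : ℕ) ≠ m - 1 by omega), Nat.add_sub_cancel_left]

lemma card_cstarStrings_succ (hm : 3 ≤ m) (hn : n + 1 = 2 * m) :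
    #(cstarStrings (n + 1)) = 2 * #(cstarStrings n) + #(cstarStrings m) := by
  let p : Fin (n + 1) := ⟨m - 1, by omega⟩
  have hmem (F : Fin (n + 1) → Bool) : p.removeNth F ∈ cstarStrings n ↔
      F ∈ cstarStrings (n + 1) ∧ ¬IsAlmostSquare m (padded F) := by
    rw [mem_cstarStrings, mem_cstarStrings, padded_removeNth]
    exact isCStar_eraseAt_iff hm hn
  have hsplit : ∀ F ∈ cstarStrings (n + 1),
      p.removeNth F ∉ cstarStrings n ↔ IsAlmostSquare m (padded F) := by
    intro F hF
    rw [hmem, not_and, not_not]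
    exact ⟨fun h => h hF, fun h _ => h⟩
  rw [← card_filter_add_card_filter_not (s := cstarStrings (n + 1))
      (fun F : Fin (n + 1) → Bool => p.removeNth F ∈ cstarStrings n),
    card_filter_removeNth_mem p fun F hF => ((hmem F).1 hF).1, Fintype.card_bool,
    filter_congr hsplit, card_filter_isAlmostSquare hm hn]

end HeadTail

/-- For every integer `m ≥ 3`, `c*_{2m} = 2 c*_{2m-1} + c*_m`. -/
theorem cstar_recurrence_even (m : ℕ) (hm : 3 ≤ m) :
    cstar (2 * m) = 2 * cstar (2 * m - 1) + cstar m := by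
  have h := HeadTail.card_cstarStrings_succ hm (show 2 * m - 1 + 1 = 2 * m by omega)
  rw [show 2 * m - 1 + 1 = 2 * m by omega] at h
  rw [HeadTail.cstar_eq_card (by omega), HeadTail.cstar_eq_card (by omega),
    HeadTail.cstar_eq_card hm, h]
end

section
/- For every integer m ≥ 2, the numbers c_m^* satisfy 4·c_{2m}^* = c_{2m+2}^* + c_{m+1}^*. -/
/-!
A word counted by `c*_n` is one that begins `HT`, ends `TH` and whose only periods are `0`
and `n - 1`. If two words share a prefix and a suffix of length `L`, with `L` at least half the
shorter length, their long periods correspond, and a short period `p < L` always has a multiple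
among the long ones. Deleting the two middle letters of a word of length `2m + 2` therefore
matches the words counted by `c*_{2m+2}` with the pairs (word `A` counted by `c*_{2m}`, two
letters), except the pairs where the letters are `HH` and `A = W₀ ⋯ W_{m-1} W₁ ⋯ W_m`: these are
exactly the insertions that create the period `m + 1`. Finally `W ↦ W₀ ⋯ W_{m-1} W₁ ⋯ W_m` is a
bijection from the words counted by `c*_{m+1}` onto the words of that shape counted by `c*_{2m}`.
-/

open Finset

lemma Nat.card_subtype_and_add_card_subtype_and_not {α : Type*} [Finite α]
    (p q : α → Prop) :
    Nat.card {a // p a ∧ q a} + Nat.card {a // p a ∧ ¬q a} = Nat.card {a // p a} := by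
  classical
  rw [← Nat.card_congr (Equiv.subtypeSubtypeEquivSubtypeInter p q),
    ← Nat.card_congr (Equiv.subtypeSubtypeEquivSubtypeInter p (¬q ·)), ← Nat.card_sum,
    Nat.card_congr (Equiv.sumCompl _)]

namespace Cstar

def HasPeriod (n : ℕ) (A : ℕ → Bool) (p : ℕ) : Prop :=
  ∀ j, p + j < n → A (p + j) = A j

section Periods
variable {n p q : ℕ} {A : ℕ → Bool}

lemma HasPeriod.add (hp : HasPeriod n A p) (hq : HasPeriod n A q) : HasPeriod n A (p + q) := by
  intro j hj
  rw [add_assoc, hp (q + j) (by omega), hq j (by omega)]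

lemma HasPeriod.mul (hp : HasPeriod n A p) (k : ℕ) : HasPeriod n A (k * p) := by
  induction k with
  | zero => intro j _; simp
  | succ k ih => rw [Nat.succ_mul]; exact ih.add hp

/-- Some multiple of `p` falls into the window `[t, t + w)`. -/
lemma not_hasPeriod_of_forall_Ico {t w : ℕ} (h : ∀ q, t ≤ q → q < t + w → ¬HasPeriod n A q)
    (hp0 : 0 < p) (hpw : p ≤ w) : ¬HasPeriod n A p := fun hp ↦ by
  have hle := Nat.div_mul_le_self (t + p - 1) p
  have hlt := Nat.lt_div_mul_add (a := t + p - 1) hp0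
  exact h _ (by omega) (by omega) (hp.mul ((t + p - 1) / p))

end Periods

structure IsCstar (n : ℕ) (A : ℕ → Bool) : Prop where
  zero : A 0 = true
  one : A 1 = false
  sub_two : A (n - 2) = false
  sub_one : A (n - 1) = true
  not_hasPeriod : ∀ p, 0 < p → p + 1 < n → ¬HasPeriod n A p

section CommonEnds
variable {n n' L : ℕ} {A B : ℕ → Bool}

lemma hasPeriod_iff_of_commonEnds (hpre : ∀ j < L, A j = B j)
    (hsuf : ∀ j < L, A (n - L + j) = B (n' - L + j)) (hLn : L ≤ n) (hnn' : n ≤ n') {p : ℕ}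
    (hp : n ≤ p + L) : HasPeriod n A p ↔ HasPeriod n' B (p + (n' - n)) := by
  have key : ∀ j, p + j < n → (A (p + j) = A j ↔ B (p + (n' - n) + j) = B j) := by
    intro j hj
    have h := hsuf (p + j - (n - L)) (by omega)
    rw [show n - L + (p + j - (n - L)) = p + j by omega,
      show n' - L + (p + j - (n - L)) = p + (n' - n) + j by omega] at h
    rw [h, hpre j (by omega)]
  constructor
  · intro h j hj
    exact (key j (by omega)).1 (h j (by omega))
  · intro h j hj
    exact (key j hj).2 (h j (by omega))

lemma isCstar_iff_of_commonEnds (hpre : ∀ j < L, A j = B j)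
    (hsuf : ∀ j < L, A (n - L + j) = B (n' - L + j)) (hL : 2 ≤ L) (hLn : L < n)
    (hnL : n ≤ 2 * L) (hnn' : n ≤ n') :
    IsCstar n' B ↔ IsCstar n A ∧ ∀ q, L ≤ q → q + L < n' → ¬HasPeriod n' B q := by
  have hsuf' : ∀ i, n - L ≤ i → i < n → A i = B (i + (n' - n)) := fun i hi hin ↦ by
    have h := hsuf (i - (n - L)) (by omega)
    rwa [show n - L + (i - (n - L)) = i by omega,
      show n' - L + (i - (n - L)) = i + (n' - n) by omega] at h
  have e0 : A 0 = B 0 := hpre 0 (by omega)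
  have e1 : A 1 = B 1 := hpre 1 (by omega)
  have e2 : A (n - 2) = B (n' - 2) := by rw [hsuf' _ (by omega) (by omega)]; congr 1; omega
  have e3 : A (n - 1) = B (n' - 1) := by rw [hsuf' _ (by omega) (by omega)]; congr 1; omega
  have hlong : (∀ p, n - L ≤ p → p + 1 < n → ¬HasPeriod n A p) ↔
      (∀ q, n' - L ≤ q → q + 1 < n' → ¬HasPeriod n' B q) := by
    constructor
    · intro h q hq hq' hB
      refine h (q - (n' - n)) (by omega) (by omega) ?_
      rwa [hasPeriod_iff_of_commonEnds hpre hsuf hLn.le hnn' (by omega),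
        show q - (n' - n) + (n' - n) = q by omega]
    · intro h p hp hp' hA
      exact h _ (by omega) (by omega)
        ((hasPeriod_iff_of_commonEnds hpre hsuf hLn.le hnn' (by omega)).1 hA)
  constructor
  · rintro ⟨h0, h1, h2, h3, hB⟩
    have hlongA := hlong.2 fun q _ hq ↦ hB q (by omega) hq
    refine ⟨⟨e0 ▸ h0, e1 ▸ h1, e2 ▸ h2, e3 ▸ h3, fun p hp hp' ↦ ?_⟩,
      fun q _ hq ↦ hB q (by omega) (by omega)⟩
    by_cases hpL : n - L ≤ p
    · exact hlongA p hpL hp'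
    · exact not_hasPeriod_of_forall_Ico (t := n - L) (w := L - 1)
        (fun q hq hq' ↦ hlongA q hq (by omega)) hp (by omega)
  · rintro ⟨⟨h0, h1, h2, h3, hA⟩, hmid⟩
    have hlongB := hlong.1 fun p hp hp' ↦ hA p (by omega) hp'
    refine ⟨e0 ▸ h0, e1 ▸ h1, e2 ▸ h2, e3 ▸ h3, fun q hq hq' ↦ ?_⟩
    by_cases hqL : L ≤ q
    · by_cases hqn : n' - L ≤ q
      · exact hlongB q hqn hq'
      · exact hmid q hqL (by omega)
    · exact not_hasPeriod_of_forall_Ico (t := n' - L) (w := L - 1)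
        (fun q hq hq' ↦ hlongB q hq (by omega)) hq (by omega)

end CommonEnds

section Middle
variable {m : ℕ}

def eraseTwo (m : ℕ) (B : ℕ → Bool) : ℕ → Bool := fun k ↦ if k < m then B k else B (k + 2)

def insertTwo (m : ℕ) (x y : Bool) (A : ℕ → Bool) : ℕ → Bool := fun k ↦
  if k < m then A k else if k = m then x else if k = m + 1 then y else A (k - 2)

lemma eraseTwo_of_lt (B : ℕ → Bool) {k : ℕ} (hk : k < m) : eraseTwo m B k = B k := if_pos hk

lemma eraseTwo_of_le (B : ℕ → Bool) {k : ℕ} (hk : m ≤ k) : eraseTwo m B k = B (k + 2) :=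
  if_neg (by omega)

lemma eraseTwo_insertTwo (x y : Bool) (A : ℕ → Bool) : eraseTwo m (insertTwo m x y A) = A := by
  funext k
  by_cases hk : k < m
  · simp [eraseTwo, insertTwo, hk]
  · simp [eraseTwo, insertTwo, hk, show ¬k + 2 < m by omega, show k + 2 ≠ m by omega,
      show k + 2 ≠ m + 1 by omega]

lemma insertTwo_eraseTwo (B : ℕ → Bool) : insertTwo m (B m) (B (m + 1)) (eraseTwo m B) = B := by
  funext k
  rcases lt_trichotomy k m with hk | rfl | hk
  · simp [eraseTwo, insertTwo, hk]
  · simp [insertTwo]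
  · by_cases hk' : k = m + 1
    · simp [insertTwo, hk']
    · simp [eraseTwo, insertTwo, hk', show ¬k < m by omega, show k ≠ m by omega,
        show ¬k - 2 < m by omega, show k - 2 + 2 = k by omega]

/-- `A = W.dropLast ++ W.tail` for a word `W` of length `m + 1`. -/
def IsDropLastAppendTail (m : ℕ) (A : ℕ → Bool) : Prop := ∀ k, k + 1 < m → A (m + k) = A (k + 1)

lemma hasPeriod_succ_iff_isDropLastAppendTail {B : ℕ → Bool} (h0 : B 0 = true)
    (hlast : B (2 * m + 1) = true) :
    HasPeriod (2 * m + 2) B (m + 1) ↔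
      B m = true ∧ B (m + 1) = true ∧ IsDropLastAppendTail m (eraseTwo m B) := by
  have hmid : ∀ k, k + 1 < m →
      (eraseTwo m B (m + k) = eraseTwo m B (k + 1) ↔ B (m + 1 + (k + 1)) = B (k + 1)) := by
    intro k hk
    rw [eraseTwo_of_le B (by omega), eraseTwo_of_lt B hk, show m + k + 2 = m + 1 + (k + 1) by ring]
  constructor
  · intro h
    refine ⟨?_, ?_, fun k hk ↦ (hmid k hk).2 (h _ (by omega))⟩
    · rw [← hlast, show 2 * m + 1 = m + 1 + m by ring, h m (by omega)]
    · rw [← h0, ← h 0 (by omega)]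
  · rintro ⟨hBm, hBm1, hshape⟩ j hj
    rcases Nat.eq_zero_or_pos j with rfl | hj0
    · rw [h0, add_zero, hBm1]
    · by_cases hjm : j = m
      · rw [hjm, hBm, show m + 1 + m = 2 * m + 1 by ring, hlast]
      · have := (hmid (j - 1) (by omega)).1 (hshape (j - 1) (by omega))
        rwa [show j - 1 + 1 = j by omega] at this

lemma isCstar_iff_eraseTwo (hm : 2 ≤ m) {B : ℕ → Bool} :
    IsCstar (2 * m + 2) B ↔ IsCstar (2 * m) (eraseTwo m B) ∧
      ¬(B m = true ∧ B (m + 1) = true ∧ IsDropLastAppendTail m (eraseTwo m B)) := by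
  rw [isCstar_iff_of_commonEnds (n := 2 * m) (n' := 2 * m + 2) (L := m) (A := eraseTwo m B)
    (B := B) (fun j hj ↦ eraseTwo_of_lt B hj)
    (fun j _ ↦ by rw [eraseTwo_of_le B (by omega)]; congr 1; omega) hm (by omega) (by omega)
    (by omega)]
  refine and_congr_right fun hA ↦ ?_
  have h0 : B 0 = true := (eraseTwo_of_lt B (show 0 < m by omega)).symm.trans hA.zero
  have hpen : B (2 * m) = false := by
    rw [← hA.sub_two, eraseTwo_of_le B (by omega)]; congr 1; omega
  have hlast : B (2 * m + 1) = true := by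
    rw [← hA.sub_one, eraseTwo_of_le B (by omega)]; congr 1; omega
  rw [← hasPeriod_succ_iff_isDropLastAppendTail h0 hlast]
  constructor
  · exact fun h ↦ h (m + 1) (by omega) (by omega)
  · intro h q hq hq' hper
    obtain rfl | rfl : m = q ∨ q = m + 1 := by omega
    · have := (hper m (by omega)).trans (hper 0 (by omega))
      rw [← two_mul, hpen, h0] at this
      exact Bool.false_ne_true this
    · exact h hper

def dropLastAppendTail (m : ℕ) (W : ℕ → Bool) : ℕ → Bool := fun k ↦
  if k < m then W k else W (k - m + 1)

lemma isCstar_dropLastAppendTail_iff (hm : 2 ≤ m) {W : ℕ → Bool} :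
    IsCstar (2 * m) (dropLastAppendTail m W) ↔ IsCstar (m + 1) W := by
  rw [isCstar_iff_of_commonEnds (n := m + 1) (n' := 2 * m) (L := m) (A := W)
    (B := dropLastAppendTail m W) (fun j hj ↦ (if_pos hj).symm)
    (fun j _ ↦ by rw [dropLastAppendTail, if_neg (by omega)]; congr 1; omega) hm (by omega)
    (by omega) (by omega)]
  exact and_iff_left fun q hq hq' ↦ absurd hq' (by omega)

end Middle

/-- Words of length `n`, padded with `false` (= `T`) from position `n` on, so that words of
different lengths can be compared position by position. -/
abbrev Word (n : ℕ) : Type := {A : ℕ → Bool // ∀ k, n ≤ k → A k = false}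

def padded {n : ℕ} (A : Fin n → Bool) : ℕ → Bool := fun k ↦
  if h : k < n then A ⟨k, h⟩ else false

lemma padded_of_lt {n : ℕ} (A : Fin n → Bool) {k : ℕ} (hk : k < n) : padded A k = A ⟨k, hk⟩ :=
  dif_pos hk

def Word.equivFin (n : ℕ) : Word n ≃ (Fin n → Bool) where
  toFun A i := A.1 i
  invFun A := ⟨padded A, fun _ hk ↦ dif_neg (by omega)⟩
  left_inv A := Subtype.ext <| funext fun k ↦ by
    by_cases hk : k < n
    · simp [padded, hk]
    · simp [padded, hk, A.2 k (by omega)]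
  right_inv A := funext fun i ↦ dif_pos i.2

instance (n : ℕ) : Finite (Word n) := .of_equiv _ (Word.equivFin n).symm

def Word.eraseTwoEquiv (m : ℕ) : Word (2 * m + 2) ≃ Word (2 * m) × Bool × Bool where
  toFun B := (⟨eraseTwo m B.1, fun k hk ↦ by
      rw [eraseTwo_of_le _ (by omega)]; exact B.2 _ (by omega)⟩, B.1 m, B.1 (m + 1))
  invFun t := ⟨insertTwo m t.2.1 t.2.2 t.1.1, fun k hk ↦ by
    simp [insertTwo, show ¬k < m by omega, show k ≠ m by omega, show k ≠ m + 1 by omega,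
      t.1.2 (k - 2) (by omega)]⟩
  left_inv B := Subtype.ext (insertTwo_eraseTwo B.1)
  right_inv t := Prod.ext (Subtype.ext (eraseTwo_insertTwo _ _ t.1.1))
    (Prod.ext (by simp [insertTwo]) (by simp [insertTwo]))

def Word.dropLastAppendTailEquiv {m : ℕ} (hm : 0 < m) :
    Word (m + 1) ≃ {A : Word (2 * m) // IsDropLastAppendTail m A.1} where
  toFun W := ⟨⟨dropLastAppendTail m W.1, fun k hk ↦ by
      rw [dropLastAppendTail, if_neg (by omega)]; exact W.2 _ (by omega)⟩,
    fun k hk ↦ by simp [dropLastAppendTail, hk, show ¬m + k < m by omega]⟩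
  invFun A := ⟨fun k ↦ if k < m then A.1.1 k else if k = m then A.1.1 (2 * m - 1) else false,
    fun k hk ↦ by simp [show ¬k < m by omega, show k ≠ m by omega]⟩
  left_inv W := Subtype.ext <| funext fun k ↦ by
    rcases lt_trichotomy k m with hk | rfl | hk
    · simp [dropLastAppendTail, hk]
    · simp [dropLastAppendTail, show ¬2 * k - 1 < k by omega, show 2 * k - 1 - k + 1 = k by omega]
    · simp [show ¬k < m by omega, show k ≠ m by omega, W.2 k (by omega)]
  right_inv A := Subtype.ext <| Subtype.ext <| funext fun k ↦ by
    by_cases hk : k < m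
    · simp [dropLastAppendTail, hk]
    · rcases lt_trichotomy (k - m + 1) m with hk' | hk' | hk'
      · simp only [dropLastAppendTail, hk, hk', if_false, if_true]
        exact (A.2 (k - m) hk').symm.trans (congrArg A.1.1 (by omega))
      · obtain rfl : k = 2 * m - 1 := by omega
        simp [dropLastAppendTail, hk, hk']
      · simp [dropLastAppendTail, hk, show ¬k - m + 1 < m by omega, show k - m + 1 ≠ m by omega,
          A.1.2 k (by omega)]

lemma forall_val_eq_imp_iff_padded {n t : ℕ} (A : Fin n → Bool) (ht : t < n) (b : Bool) :
    (∀ i : Fin n, (i : ℕ) = t → A i = b) ↔ padded A t = b := by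
  rw [padded_of_lt A ht]
  exact ⟨fun h ↦ h _ rfl, fun h i hi ↦ by rwa [show i = ⟨t, hi ▸ i.2⟩ from Fin.ext hi]⟩

lemma forall_add_imp_iff_hasPeriod_padded {n : ℕ} (A : Fin n → Bool) (i : Fin n) :
    (∀ j : Fin n, (i : ℕ) + j < n → A (i + j) = A j) ↔ HasPeriod n (padded A) i := by
  have hval : ∀ (j : Fin n) (hj : (i : ℕ) + j < n), i + j = ⟨i + j, hj⟩ := fun j hj ↦
    Fin.ext (Fin.val_add_eq_of_add_lt hj)
  constructor
  · intro h j hj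
    rw [padded_of_lt A hj, padded_of_lt A (by omega), ← h ⟨j, by omega⟩ hj, hval _ hj]
  · intro h j hj
    have := h j hj
    rwa [padded_of_lt A hj, padded_of_lt A j.2, ← hval j hj] at this

open Classical in
noncomputable def autocorrelation (n : ℕ) (A : ℕ → Bool) : ℕ :=
  ∑ i ∈ range n, if HasPeriod n A i then 2 ^ (n - 1 - i) else 0

lemma conway_self_eq_autocorrelation {n : ℕ} (A : Fin n → Bool) :
    conway A A = autocorrelation n (padded A) := by
  classical
  rw [conway, autocorrelation, ← Fin.sum_univ_eq_sum_range]
  exact Finset.sum_congr rfl fun i _ ↦ if_congr (forall_add_imp_iff_hasPeriod_padded A i) rfl rfl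

lemma autocorrelation_eq_iff {n : ℕ} {A : ℕ → Bool} (hn : 2 ≤ n) (hA : A (n - 1) = A 0) :
    autocorrelation n A = 2 ^ (n - 1) + 1 ↔ ∀ p, 0 < p → p + 1 < n → ¬HasPeriod n A p := by
  obtain ⟨k, rfl⟩ : ∃ k, n = k + 2 := ⟨n - 2, by omega⟩
  have h0 : HasPeriod (k + 2) A 0 := fun j _ ↦ by rw [zero_add]
  have hlast : HasPeriod (k + 2) A (k + 1) := fun j hj ↦ by
    obtain rfl : j = 0 := by omega
    exact hA
  rw [autocorrelation, sum_range_succ, sum_range_succ', if_pos h0, if_pos hlast,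
    show k + 2 - 1 - (k + 1) = 0 by omega, Nat.sub_zero, pow_zero, add_left_inj,
    add_eq_right, sum_eq_zero_iff]
  simp only [mem_range, ite_eq_right_iff, pow_eq_zero_iff', two_ne_zero, false_and, imp_false]
  constructor
  · intro h p hp hp'
    simpa [show p - 1 + 1 = p by omega] using h (p - 1) (by omega)
  · exact fun h i hi ↦ h (i + 1) (by omega) (by omega)

lemma isCstar_padded_iff {n : ℕ} (hn : 2 ≤ n) (A : Fin n → Bool) :
    IsCstar n (padded A) ↔
      (∀ i : Fin n, (i : ℕ) = 0 → A i = true) ∧ (∀ i : Fin n, (i : ℕ) = 1 → A i = false) ∧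
      (∀ i : Fin n, (i : ℕ) = n - 2 → A i = false) ∧
      (∀ i : Fin n, (i : ℕ) = n - 1 → A i = true) ∧ conway A A = 2 ^ (n - 1) + 1 := by
  rw [forall_val_eq_imp_iff_padded A (by omega), forall_val_eq_imp_iff_padded A (by omega),
    forall_val_eq_imp_iff_padded A (by omega), forall_val_eq_imp_iff_padded A (by omega),
    conway_self_eq_autocorrelation]
  constructor
  · rintro ⟨h0, h1, h2, h3, hp⟩
    exact ⟨h0, h1, h2, h3, (autocorrelation_eq_iff hn (h3.trans h0.symm)).2 hp⟩
  · rintro ⟨h0, h1, h2, h3, hc⟩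
    exact ⟨h0, h1, h2, h3, (autocorrelation_eq_iff hn (h3.trans h0.symm)).1 hc⟩

lemma cstar_eq_card {n : ℕ} (hn : 2 ≤ n) : cstar n = Nat.card {A : Word n // IsCstar n A.1} := by
  rw [cstar, ← Nat.card_eq_fintype_card]
  exact Nat.card_congr
    ((Word.equivFin n).symm.subtypeEquiv fun A ↦ (isCstar_padded_iff hn A).symm)

section Counting
variable {m : ℕ}

lemma card_isCstar_two_mul_add_two (hm : 2 ≤ m) :
    Nat.card {B : Word (2 * m + 2) // IsCstar (2 * m + 2) B.1} =
      Nat.card {t : Word (2 * m) × Bool × Bool // IsCstar (2 * m) t.1.1 ∧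
        ¬(t.2.1 = true ∧ t.2.2 = true ∧ IsDropLastAppendTail m t.1.1)} :=
  Nat.card_congr ((Word.eraseTwoEquiv m).subtypeEquiv fun _ ↦ isCstar_iff_eraseTwo hm)

lemma card_isCstar_succ (hm : 2 ≤ m) :
    Nat.card {W : Word (m + 1) // IsCstar (m + 1) W.1} =
      Nat.card {A : Word (2 * m) // IsDropLastAppendTail m A.1 ∧ IsCstar (2 * m) A.1} :=
  Nat.card_congr <| ((Word.dropLastAppendTailEquiv (by omega)).subtypeEquiv
    fun _ ↦ (isCstar_dropLastAppendTail_iff hm).symm).trans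
      (Equiv.subtypeSubtypeEquivSubtypeInter _ _)

lemma four_mul_card_isCstar (hm : 2 ≤ m) :
    4 * Nat.card {A : Word (2 * m) // IsCstar (2 * m) A.1} =
      Nat.card {B : Word (2 * m + 2) // IsCstar (2 * m + 2) B.1} +
        Nat.card {W : Word (m + 1) // IsCstar (m + 1) W.1} := by
  have hall : Nat.card {t : Word (2 * m) × Bool × Bool // IsCstar (2 * m) t.1.1} =
      4 * Nat.card {A : Word (2 * m) // IsCstar (2 * m) A.1} := by
    rw [Nat.card_congr (Equiv.prodSubtypeFstEquivSubtypeProd (β := Bool × Bool)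
      (p := fun A : Word (2 * m) ↦ IsCstar (2 * m) A.1)), Nat.card_prod, mul_comm]
    simp
  have hdup : Nat.card {t : Word (2 * m) × Bool × Bool // IsCstar (2 * m) t.1.1 ∧
      (t.2.1 = true ∧ t.2.2 = true ∧ IsDropLastAppendTail m t.1.1)} =
      Nat.card {A : Word (2 * m) // IsDropLastAppendTail m A.1 ∧ IsCstar (2 * m) A.1} :=
    Nat.card_congr
      { toFun := fun t ↦ ⟨t.1.1, t.2.2.2.2, t.2.1⟩
        invFun := fun A ↦ ⟨(A.1, true, true), A.2.2, rfl, rfl, A.2.1⟩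
        left_inv := fun t ↦ Subtype.ext (Prod.ext rfl (Prod.ext t.2.2.1.symm t.2.2.2.1.symm))
        right_inv := fun _ ↦ rfl }
  rw [card_isCstar_two_mul_add_two hm, card_isCstar_succ hm, ← hall,
    ← Nat.card_subtype_and_add_card_subtype_and_not, hdup, add_comm]

end Counting

end Cstar

/-- For every integer `m ≥ 2`, `4 c*_{2m} = c*_{2m+2} + c*_{m+1}`. -/
theorem four_cstar_even (m : ℕ) (hm : 2 ≤ m) :
    4 * cstar (2 * m) = cstar (2 * m + 2) + cstar (m + 1) := by
  rw [Cstar.cstar_eq_card (by omega), Cstar.cstar_eq_card (by omega),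
    Cstar.cstar_eq_card (by omega)]
  exact Cstar.four_mul_card_isCstar hm
end

section
/- Let m and k be positive integers with 0 ≤ k ≤ 2^m − 1. The number of ordered pairs (A_1, A_2) of head/tail strings of length m with Conway number C(A_2, A_1) = k is equal to the number of head/tail strings A of length 2m whose autocorrelation C(A,A) is congruent to k modulo 2^m. -/
private def joinStr {m : ℕ} (P : (Fin m → Bool) × (Fin m → Bool)) : Fin (2 * m) → Bool :=
  fun i => if h : (i : ℕ) < m then P.1 ⟨i, h⟩ else P.2 ⟨(i : ℕ) - m, by omega⟩

private def leftStr {m : ℕ} (A : Fin (2 * m) → Bool) : Fin m → Bool :=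
  fun j => A ⟨j, by omega⟩

private def rightStr {m : ℕ} (A : Fin (2 * m) → Bool) : Fin m → Bool :=
  fun j => A ⟨m + j, by omega⟩

private lemma leftStr_join {m : ℕ} (P : (Fin m → Bool) × (Fin m → Bool)) :
    leftStr (joinStr P) = P.1 := by
  funext j
  simp [leftStr, joinStr, j.isLt]

private lemma rightStr_join {m : ℕ} (P : (Fin m → Bool) × (Fin m → Bool)) :
    rightStr (joinStr P) = P.2 := by
  funext j
  show joinStr P ⟨m + (j : ℕ), by omega⟩ = P.2 j
  unfold joinStr
  rw [dif_neg (by simp only [Fin.val_mk]; omega)]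
  exact congrArg P.2 (Fin.ext (by simp only [Fin.val_mk]; omega))

private lemma join_left_right {m : ℕ} (A : Fin (2 * m) → Bool) :
    joinStr (leftStr A, rightStr A) = A := by
  funext i
  by_cases h : (i : ℕ) < m
  · simp [joinStr, leftStr, h]
  · unfold joinStr
    rw [dif_neg h]
    show rightStr A ⟨(i : ℕ) - m, _⟩ = A i
    unfold rightStr
    congr 1
    apply Fin.ext
    show m + ((i : ℕ) - m) = (i : ℕ)
    omega

private lemma sum_two_pow (n : ℕ) : ∑ i ∈ Finset.range n, 2 ^ i = 2 ^ n - 1 := by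
  induction n with
  | zero => simp
  | succ n ih =>
    rw [Finset.sum_range_succ, ih, pow_succ]
    have := Nat.two_pow_pos n
    omega

private lemma conway_lt {n : ℕ} (A B : Fin n → Bool) : conway A B < 2 ^ n := by
  have h1 : conway A B ≤ ∑ i : Fin n, 2 ^ (n - 1 - (i : ℕ)) := by
    apply Finset.sum_le_sum
    intro i _
    split <;> simp
  have h2 : (∑ i : Fin n, 2 ^ (n - 1 - (i : ℕ))) = 2 ^ n - 1 := by
    rw [Fin.sum_univ_eq_sum_range (fun i => 2 ^ (n - 1 - i)) n,
        Finset.sum_range_reflect (fun i => 2 ^ i) n, sum_two_pow]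
  have := Nat.two_pow_pos n
  omega

private lemma conway_join {m : ℕ} (hm : 0 < m) (A : Fin (2 * m) → Bool) :
    conway A A % 2 ^ m = conway (rightStr A) (leftStr A) := by
  classical
  have key : ∀ (x y : Fin (2 * m)), (x : ℕ) = (y : ℕ) → A x = A y :=
    fun x y h => congrArg A (Fin.ext h)
  set F : Fin (2 * m) → ℕ := fun i =>
    if (∀ j : Fin (2 * m), (i : ℕ) + (j : ℕ) < 2 * m → A (i + j) = A j)
    then 2 ^ (2 * m - 1 - (i : ℕ)) else 0 with hF
  have hsplit : conway A A =
      (∑ i ∈ Finset.univ.filter (fun i : Fin (2 * m) => (i : ℕ) < m), F i) +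
      (∑ i ∈ Finset.univ.filter (fun i : Fin (2 * m) => ¬ (i : ℕ) < m), F i) := by
    rw [conway]
    exact (Finset.sum_filter_add_sum_filter_not _ _ _).symm
  have hS1 : 2 ^ m ∣ ∑ i ∈ Finset.univ.filter (fun i : Fin (2 * m) => (i : ℕ) < m), F i := by
    apply Finset.dvd_sum
    intro i hi
    simp only [Finset.mem_filter] at hi
    simp only [hF]
    split
    · exact pow_dvd_pow 2 (by omega)
    · exact dvd_zero _
  have hS2 : conway (rightStr A) (leftStr A) =
      ∑ i ∈ Finset.univ.filter (fun i : Fin (2 * m) => ¬ (i : ℕ) < m), F i := by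
    rw [conway]
    refine Finset.sum_bij (fun (t : Fin m) _ => (⟨m + (t : ℕ), by omega⟩ : Fin (2 * m)))
      ?_ ?_ ?_ ?_
    · intro t _
      simp only [Finset.mem_filter, Finset.mem_univ, true_and]
      omega
    · intro a _ b _ hab
      have h2 : m + (a : ℕ) = m + (b : ℕ) := congrArg Fin.val hab
      apply Fin.ext
      omega
    · intro i hi
      simp only [Finset.mem_filter, Finset.mem_univ, true_and, not_lt] at hi
      refine ⟨⟨(i : ℕ) - m, by omega⟩, Finset.mem_univ _, ?_⟩
      apply Fin.ext
      show m + ((i : ℕ) - m) = (i : ℕ)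
      omega
    · intro t _
      simp only [hF]
      have hpow : 2 ^ (m - 1 - (t : ℕ)) = 2 ^ (2 * m - 1 - (m + (t : ℕ))) := by
        congr 1; omega
      have hcond : (∀ j : Fin m, (t : ℕ) + (j : ℕ) < m →
            rightStr A (t + j) = leftStr A j) ↔
          (∀ j : Fin (2 * m), (m + (t : ℕ)) + (j : ℕ) < 2 * m →
            A ((⟨m + (t : ℕ), by omega⟩ : Fin (2 * m)) + j) = A j) := by
        constructor
        · intro h j hj
          have hjm : (j : ℕ) < m := by omega
          have h1 := h ⟨(j : ℕ), hjm⟩ ((by omega : (t : ℕ) + (j : ℕ) < m))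
          simp only [rightStr, leftStr] at h1
          refine (key _ _ ?_).trans (h1.trans (key _ _ ?_))
          · show ((⟨m + (t : ℕ), by omega⟩ : Fin (2 * m)) + j : Fin (2 * m)).val
              = m + ((t + ⟨(j : ℕ), hjm⟩ : Fin m) : ℕ)
            simp only [Fin.val_add, Fin.val_mk]
            rw [Nat.mod_eq_of_lt (show m + (t : ℕ) + (j : ℕ) < 2 * m by omega),
              Nat.mod_eq_of_lt (show (t : ℕ) + (j : ℕ) < m by omega)]
            omega
          · rfl
        · intro h j hj
          have h1 := h ⟨(j : ℕ), by omega⟩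
            ((by omega : m + (t : ℕ) + (j : ℕ) < 2 * m))
          simp only [rightStr, leftStr]
          refine (key _ _ ?_).trans (h1.trans (key _ _ ?_))
          · show m + ((t + j : Fin m) : ℕ)
              = ((⟨m + (t : ℕ), by omega⟩ : Fin (2 * m)) + ⟨(j : ℕ), by omega⟩ : Fin (2 * m)).val
            simp only [Fin.val_add, Fin.val_mk]
            rw [Nat.mod_eq_of_lt (show (t : ℕ) + (j : ℕ) < m by omega),
              Nat.mod_eq_of_lt (show m + (t : ℕ) + (j : ℕ) < 2 * m by omega)]
            omega
          · rfl
      rw [if_congr hcond rfl rfl, hpow]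
  have hlt := conway_lt (rightStr A) (leftStr A)
  obtain ⟨c, hc⟩ := hS1
  rw [hsplit, ← hS2, hc]
  rw [Nat.add_comm, Nat.add_mul_mod_self_left, Nat.mod_eq_of_lt hlt]

/-- The number of ordered pairs `(A₁, A₂)` of strings of length `m` with Conway number
`C(A₂, A₁) = k` equals the number of strings `A` of length `2m` whose autocorrelation
`C(A,A)` is congruent to `k` modulo `2^m`. -/
theorem card_pairs_eq_card_autocorr (m k : ℕ) (hm : 0 < m) (hk : 0 < k)
    (hk2 : k ≤ 2 ^ m - 1) :
    Fintype.card {P : (Fin m → Bool) × (Fin m → Bool) // conway P.2 P.1 = k} =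
      Fintype.card {A : Fin (2 * m) → Bool // conway A A ≡ k [MOD 2 ^ m]} := by
  have hk' : k < 2 ^ m := by have := Nat.two_pow_pos m; omega
  apply Fintype.card_congr
  refine ⟨fun P => ⟨joinStr P.1, ?_⟩, fun A => ⟨(leftStr A.1, rightStr A.1), ?_⟩, ?_, ?_⟩
  · show conway (joinStr P.1) (joinStr P.1) % 2 ^ m = k % 2 ^ m
    rw [conway_join hm, rightStr_join, leftStr_join, P.2, Nat.mod_eq_of_lt hk']
  · have h' : conway A.1 A.1 % 2 ^ m = k % 2 ^ m := A.2
    have hj := conway_join hm A.1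
    show conway (rightStr A.1) (leftStr A.1) = k
    rw [← hj, h', Nat.mod_eq_of_lt hk']
  · intro P
    apply Subtype.ext
    exact Prod.ext (leftStr_join P.1) (rightStr_join P.1)
  · intro A
    apply Subtype.ext
    exact join_left_right A.1
end

section
/- Let m ≥ 2 and let A be a head/tail string of length 2m whose autocorrelation C(A,A) is congruent to 1 modulo 2^m (i.e., its last m binary bits are 00…01). Then C(A,A) = 2^{2m−1} + 1 (the 2m-bit binary string 10…01). -/
/-- `p` is a period of `A` (as a natural-number shift). -/
def per {n : ℕ} (A : Fin n → Bool) (p : ℕ) : Prop :=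
  ∀ k j : Fin n, (k : ℕ) = p + (j : ℕ) → A k = A j

instance {n : ℕ} (A : Fin n → Bool) (p : ℕ) : Decidable (per A p) := by
  unfold per; infer_instance

lemma per_zero {n : ℕ} (A : Fin n → Bool) : per A 0 := by
  intro k j h
  congr 1
  exact Fin.ext (by simpa using h)

lemma per_add {n : ℕ} (A : Fin n → Bool) {p q : ℕ} (hp : per A p) (hq : per A q) :
    per A (p + q) := by
  intro k j h
  have hlt : q + (j : ℕ) < n := by have := k.isLt; omega
  have h1 : A k = A ⟨q + (j : ℕ), hlt⟩ := hp k ⟨q + (j : ℕ), hlt⟩ (by simp [h]; ring)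
  rw [h1]
  exact hq _ j rfl

lemma per_mul {n : ℕ} (A : Fin n → Bool) {p : ℕ} (hp : per A p) (k : ℕ) :
    per A (k * p) := by
  induction k with
  | zero => simpa using per_zero A
  | succ k ih => have := per_add A ih hp; simpa [Nat.succ_mul] using this

lemma conway_eq {n : ℕ} (A : Fin n → Bool) :
    conway A A = ∑ i ∈ Finset.range n, if per A i then 2 ^ (n - 1 - i) else 0 := by
  rw [conway, ← Fin.sum_univ_eq_sum_range (fun i => if per A i then 2 ^ (n - 1 - i) else 0) n]
  refine Finset.sum_congr rfl fun i _ => ?_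
  refine if_congr ?_ rfl rfl
  constructor
  · intro hQ k j hk
    have hj : (i : ℕ) + (j : ℕ) < n := by have := k.isLt; omega
    have h1 := hQ j hj
    have hmod : ((i : ℕ) + (j : ℕ)) % n = (i : ℕ) + (j : ℕ) := Nat.mod_eq_of_lt hj
    have hk2 : k = i + j := Fin.ext (by simp [Fin.add_def, hmod, hk])
    rw [hk2]; exact h1
  · intro hP j hj
    exact hP (i + j) j (by simp [Fin.add_def, Nat.mod_eq_of_lt hj])

lemma two_pow_sum (m : ℕ) : ∑ j ∈ Finset.range m, 2 ^ j = 2 ^ m - 1 := by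
  induction m with
  | zero => simp
  | succ m ih =>
    rw [Finset.sum_range_succ, ih]
    have h1 : 1 ≤ 2 ^ m := Nat.one_le_two_pow
    have h2 : 2 ^ (m + 1) = 2 * 2 ^ m := by ring
    omega

/-- If `m ≥ 2` and `A` is a string of length `2m` whose autocorrelation is congruent to
`1` modulo `2^m`, then its autocorrelation equals `2^{2m-1} + 1`. -/
theorem autocorr_even_length (m : ℕ) (hm : 2 ≤ m) (A : Fin (2 * m) → Bool)
    (h : conway A A ≡ 1 [MOD 2 ^ m]) :
    conway A A = 2 ^ (2 * m - 1) + 1 := by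
  set f : ℕ → ℕ := fun i => if per A i then 2 ^ (2 * m - 1 - i) else 0 with hf
  have hconway : conway A A = ∑ i ∈ Finset.range (2 * m), f i := conway_eq A
  have hsplit : ∑ i ∈ Finset.range (2 * m), f i =
      (∑ i ∈ Finset.Ico 0 m, f i) + ∑ i ∈ Finset.Ico m (2 * m), f i := by
    rw [Finset.range_eq_Ico, ← Finset.sum_Ico_consecutive f (Nat.zero_le m) (by omega)]
  set S := ∑ i ∈ Finset.Ico m (2 * m), f i with hS
  have hdvd : 2 ^ m ∣ ∑ i ∈ Finset.Ico 0 m, f i := by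
    refine Finset.dvd_sum fun i hi => ?_
    rw [Finset.mem_Ico] at hi
    simp only [hf]
    split
    · exact pow_dvd_pow 2 (by omega)
    · exact dvd_zero _
  have hSle : S ≤ 2 ^ m - 1 := by
    have h1 : S ≤ ∑ i ∈ Finset.Ico m (2 * m), 2 ^ (2 * m - 1 - i) := by
      refine Finset.sum_le_sum fun i _ => ?_
      simp only [hf]; split <;> simp
    have h2 : ∑ i ∈ Finset.Ico m (2 * m), 2 ^ (2 * m - 1 - i)
        = ∑ j ∈ Finset.range m, 2 ^ (m - 1 - j) := by
      rw [Finset.sum_Ico_eq_sum_range]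
      have hm' : 2 * m - m = m := by omega
      rw [hm']
      refine Finset.sum_congr rfl fun j hj => ?_
      rw [Finset.mem_range] at hj
      congr 1
      omega
    have h3 : ∑ j ∈ Finset.range m, 2 ^ (m - 1 - j) = ∑ j ∈ Finset.range m, 2 ^ j :=
      Finset.sum_range_reflect (fun j => 2 ^ j) m
    calc S ≤ _ := h1
      _ = _ := h2
      _ = _ := h3
      _ = 2 ^ m - 1 := two_pow_sum m
  have hS1 : S = 1 := by
    have hmod : conway A A ≡ S [MOD 2 ^ m] := by
      rw [hconway, hsplit]
      have : (∑ i ∈ Finset.Ico 0 m, f i) ≡ 0 [MOD 2 ^ m] :=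
        (Nat.modEq_zero_iff_dvd).2 hdvd
      simpa using this.add_right S
    have h1 : S ≡ 1 [MOD 2 ^ m] := hmod.symm.trans h
    have h2 : 1 < 2 ^ m := Nat.one_lt_two_pow (by omega)
    have h3 := h1
    unfold Nat.ModEq at h3
    rw [Nat.mod_eq_of_lt (by omega), Nat.mod_eq_of_lt h2] at h3
    exact h3
  have hnoper : ∀ i, m ≤ i → i ≤ 2 * m - 2 → ¬ per A i := by
    intro i h1 h2 hper
    have hterm : f i ≤ S := by
      refine Finset.single_le_sum (fun j _ => Nat.zero_le (f j)) ?_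
      rw [Finset.mem_Ico]; omega
    have heq : f i = 2 ^ (2 * m - 1 - i) := by simp [hf, hper]
    have hge : 2 ≤ 2 ^ (2 * m - 1 - i) := by
      calc 2 = 2 ^ 1 := rfl
        _ ≤ 2 ^ (2 * m - 1 - i) := Nat.pow_le_pow_right (by norm_num) (by omega)
    omega
  have hlast : per A (2 * m - 1) := by
    by_contra hnp
    have hsum0 : ∑ i ∈ Finset.Ico m (2 * m - 1), f i = 0 := by
      refine Finset.sum_eq_zero fun i hi => ?_
      rw [Finset.mem_Ico] at hi
      simp only [hf]
      rw [if_neg (hnoper i hi.1 (by omega))]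
    have hstep : ∑ i ∈ Finset.Ico m (2 * m - 1 + 1), f i =
        (∑ i ∈ Finset.Ico m (2 * m - 1), f i) + f (2 * m - 1) :=
      Finset.sum_Ico_succ_top (by omega) f
    rw [show 2 * m - 1 + 1 = 2 * m by omega] at hstep
    rw [← hS, hS1, hsum0] at hstep
    simp only [hf] at hstep
    rw [if_neg hnp] at hstep
    omega
  have hnosmall : ∀ i, 1 ≤ i → i ≤ m - 1 → ¬ per A i := by
    intro i h1 h2 hper
    set q := (m - 1) / i + 1 with hq
    have hqi : q * i = ((m - 1) / i) * i + i := by rw [hq]; ring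
    have hdm := Nat.div_add_mod (m - 1) i
    have hcomm : ((m - 1) / i) * i = i * ((m - 1) / i) := Nat.mul_comm _ _
    have hmlt : (m - 1) % i < i := Nat.mod_lt _ (by omega)
    have hlo : m ≤ q * i := by omega
    have hhi : q * i ≤ 2 * m - 2 := by omega
    exact hnoper (q * i) hlo hhi (per_mul A hper q)
  have hfinal : ∑ i ∈ Finset.range (2 * m), f i = f 0 + f (2 * m - 1) := by
    have hsub : ({0, 2 * m - 1} : Finset ℕ) ⊆ Finset.range (2 * m) := by
      intro x hx
      simp only [Finset.mem_insert, Finset.mem_singleton] at hx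
      rw [Finset.mem_range]
      rcases hx with rfl | rfl <;> omega
    rw [← Finset.sum_subset hsub, Finset.sum_pair (by omega : (0 : ℕ) ≠ 2 * m - 1)]
    intro x hx hx2
    simp only [Finset.mem_insert, Finset.mem_singleton, not_or] at hx2
    rw [Finset.mem_range] at hx
    simp only [hf]
    rw [if_neg]
    rcases Nat.lt_or_ge x m with hxm | hxm
    · exact hnosmall x (by omega) (by omega)
    · exact hnoper x hxm (by omega)
  have hf0 : f 0 = 2 ^ (2 * m - 1) := by simp [hf, per_zero A]
  have hflast : f (2 * m - 1) = 1 := by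
    simp only [hf]
    rw [if_pos hlast]
    simp [Nat.sub_sub_self (by omega : 1 ≤ 2 * m)]
  rw [hconway, hfinal, hf0, hflast]
end

section
/- Let m ≥ 2 and let A be a head/tail string of length 2m+1 whose autocorrelation C(A,A) is congruent to 1 modulo 2^m (i.e., its last m binary bits are 00…01). Then C(A,A) equals either 2^{2m} + 1 or 2^{2m} + 2^m + 1. -/
section Aux

variable {n : ℕ} (A : Fin n → Bool)

/-- `p` is a period of `A`. -/
def IsPer (p : ℕ) : Prop :=
  ∀ k : ℕ, (hk : p + k < n) →
    A ⟨p + k, hk⟩ = A ⟨k, lt_of_le_of_lt (Nat.le_add_left k p) hk⟩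

lemma A_mk_congr {a b : ℕ} (ha : a < n) (hb : b < n) (hab : a = b) :
    A ⟨a, ha⟩ = A ⟨b, hb⟩ := by subst hab; rfl

lemma isPer_zero : IsPer A 0 := fun k hk => A_mk_congr A _ _ (by omega)

lemma isPer_add {p q : ℕ} (hp : IsPer A p) (hq : IsPer A q) : IsPer A (p + q) := by
  intro k hk
  have h1 : p + (q + k) < n := by omega
  have e1 : A ⟨p + q + k, hk⟩ = A ⟨p + (q + k), h1⟩ := A_mk_congr A _ _ (by omega)
  rw [e1, hp (q + k) h1, hq k (by omega)]

lemma isPer_mul {p : ℕ} (hp : IsPer A p) : ∀ k : ℕ, IsPer A (k * p)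
  | 0 => by simpa using isPer_zero A
  | (k + 1) => by
      have : (k + 1) * p = k * p + p := by ring
      rw [this]
      exact isPer_add A (isPer_mul hp k) hp

open Classical in
lemma conway_self_eq :
    conway A A = ∑ i ∈ Finset.range n, (if IsPer A i then 2 ^ (n - 1 - i) else 0) := by
  classical
  rw [conway, ← Fin.sum_univ_eq_sum_range]
  refine Finset.sum_congr rfl fun i _ => ?_
  refine if_congr ?_ rfl rfl
  constructor
  · intro hc k hk
    have hk' : k < n := by omega
    have := hc ⟨k, hk'⟩ hk
    have e : i + (⟨k, hk'⟩ : Fin n) = ⟨(i : ℕ) + k, hk⟩ := by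
      rw [Fin.add_def]
      exact Fin.ext (Nat.mod_eq_of_lt hk)
    rwa [e] at this
  · intro hP j hj
    have := hP (j : ℕ) hj
    have e : i + j = ⟨(i : ℕ) + (j : ℕ), hj⟩ := by
      rw [Fin.add_def]
      exact Fin.ext (Nat.mod_eq_of_lt hj)
    rw [e]
    exact this

end Aux

lemma sum_le_pow_aux : ∀ (b : ℕ) (g : ℕ → ℕ), (∀ i, g i ≤ 2 ^ (b - 1 - i)) →
    ∑ i ∈ Finset.range b, g i ≤ 2 ^ b - 1
  | 0, g, hg => by simp
  | (b + 1), g, hg => by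
      rw [Finset.sum_range_succ']
      have h1 : ∑ i ∈ Finset.range b, g (i + 1) ≤ 2 ^ b - 1 := by
        refine sum_le_pow_aux b (fun i => g (i + 1)) fun i => ?_
        have := hg (i + 1)
        have e : b + 1 - 1 - (i + 1) = b - 1 - i := by omega
        rwa [e] at this
      have h2 : g 0 ≤ 2 ^ b := by simpa using hg 0
      have h3 : (2 : ℕ) ^ (b + 1) = 2 ^ b + 2 ^ b := by ring
      have h4 : 1 ≤ 2 ^ b := Nat.one_le_two_pow
      omega

/-- If `m ≥ 2` and `A` is a string of length `2m+1` whose autocorrelation is congruent to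
`1` modulo `2^m`, then its autocorrelation equals `2^{2m} + 1` or `2^{2m} + 2^m + 1`. -/
theorem autocorr_odd_length (m : ℕ) (hm : 2 ≤ m) (A : Fin (2 * m + 1) → Bool)
    (h : conway A A ≡ 1 [MOD 2 ^ m]) :
    conway A A = 2 ^ (2 * m) + 1 ∨ conway A A = 2 ^ (2 * m) + 2 ^ m + 1 := by
  classical
  set f : ℕ → ℕ := fun i => if IsPer A i then 2 ^ (2 * m + 1 - 1 - i) else 0 with hf
  have hc : conway A A = ∑ i ∈ Finset.range (2 * m + 1), f i := conway_self_eq A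
  -- split the sum
  have hsplit : ∑ i ∈ Finset.range (2 * m + 1), f i
      = ∑ i ∈ Finset.range (m + 1), f i + ∑ i ∈ Finset.Ico (m + 1) (2 * m + 1), f i :=
    (Finset.sum_range_add_sum_Ico f (by omega)).symm
  -- divisibility of low part
  obtain ⟨d, hd⟩ : 2 ^ m ∣ ∑ i ∈ Finset.range (m + 1), f i := by
    refine Finset.dvd_sum fun i hi => ?_
    simp only [hf]
    split
    · exact pow_dvd_pow 2 (by simp at hi; omega)
    · exact dvd_zero _
  set S := ∑ i ∈ Finset.Ico (m + 1) (2 * m + 1), f i with hSdef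
  -- S < 2^m
  have hSlt : S < 2 ^ m := by
    rw [hSdef, Finset.sum_Ico_eq_sum_range]
    have hnm : 2 * m + 1 - (m + 1) = m := by omega
    rw [hnm]
    have := sum_le_pow_aux m (fun i => f (m + 1 + i)) ?_
    · have : (1 : ℕ) ≤ 2 ^ m := Nat.one_le_two_pow
      omega
    · intro i
      simp only [hf]
      split
      · exact Nat.pow_le_pow_right (by norm_num) (by omega)
      · exact Nat.zero_le _
  -- S = 1
  have hS1 : S = 1 := by
    have hmod : conway A A % 2 ^ m = 1 % 2 ^ m := h
    rw [hc, hsplit, hd] at hmod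
    have e1 : 2 ^ m * d + S = S + 2 ^ m * d := by ring
    rw [e1, Nat.add_mul_mod_self_left, Nat.mod_eq_of_lt hSlt,
      Nat.mod_eq_of_lt (by have : (2:ℕ)^2 ≤ 2^m := Nat.pow_le_pow_right (by norm_num) hm; omega)]
      at hmod
    exact hmod
  -- no periods in [m+1, 2m-1]
  have hno : ∀ i, m + 1 ≤ i → i ≤ 2 * m - 1 → ¬ IsPer A i := by
    intro i hi1 hi2 hPer
    have hfi : f i = 2 ^ (2 * m + 1 - 1 - i) := by simp [hf, hPer]
    have hle : f i ≤ S := by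
      rw [hSdef]
      exact Finset.single_le_sum (fun j _ => Nat.zero_le _)
        (Finset.mem_Ico.mpr ⟨hi1, by omega⟩)
    have h2 : 2 ^ 1 ≤ 2 ^ (2 * m + 1 - 1 - i) := Nat.pow_le_pow_right (by norm_num) (by omega)
    omega
  -- no small periods
  have hsmall : ∀ p, 1 ≤ p → p ≤ m - 1 → ¬ IsPer A p := by
    intro p hp1 hp2 hPer
    have hdm := Nat.div_add_mod m p
    have hmp : m % p < p := Nat.mod_lt _ (by omega)
    have hmul : (m / p) * p ≤ m := Nat.div_mul_le_self m p
    have hexp : (m / p + 1) * p = m / p * p + p := by rw [add_mul, one_mul]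
    have hcomm : p * (m / p) = m / p * p := Nat.mul_comm _ _
    exact hno ((m / p + 1) * p) (by omega) (by omega) (isPer_mul A hPer (m / p + 1))
  -- compute the low part
  have hlow : ∑ i ∈ Finset.range (m + 1), f i = 2 ^ (2 * m) + f m := by
    rw [Finset.sum_range_succ]
    have h0 : ∑ i ∈ Finset.range m, f i = f 0 := by
      refine Finset.sum_eq_single_of_mem 0 (Finset.mem_range.mpr (by omega)) ?_
      intro b hb hb0
      simp only [Finset.mem_range] at hb
      simp [hf, hsmall b (by omega) (by omega)]
    have e0 : 2 * m + 1 - 1 - 0 = 2 * m := by omega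
    rw [h0]
    have : f 0 = 2 ^ (2 * m) := by
      simp only [hf]
      rw [if_pos (isPer_zero A), e0]
    rw [this]
  have hfm : f m = if IsPer A m then 2 ^ m else 0 := by
    have e : 2 * m + 1 - 1 - m = m := by omega
    simp only [hf]
    rw [e]
  rw [hc, hsplit, hlow, hS1, hfm]
  by_cases hPm : IsPer A m
  · right; simp [hPm]
  · left; simp [hPm]
end

section
/- Let m ≥ 2 and let A be a head/tail string of length 2m+2 whose autocorrelation C(A,A) is congruent to 1 modulo 2^m (i.e., its last m binary bits are 00…01). Then C(A,A) equals either 2^{2m+1} + 1 or 2^{2m+1} + 2^m + 1. -/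
open Finset

/-- The paper's `δ_{s+1}` for `C(A,B)`, with 0-indexed positions. -/
def Overlaps {n : ℕ} (A B : Fin n → Bool) (s : ℕ) : Prop :=
  ∀ j (h : s + j < n), A ⟨s + j, h⟩ = B ⟨j, by omega⟩

theorem overlaps_self_zero {n : ℕ} (A : Fin n → Bool) : Overlaps A A 0 :=
  fun j _ => congrArg A (Fin.ext (Nat.zero_add j))

theorem Overlaps.self_mul {n : ℕ} {A : Fin n → Bool} {s : ℕ} (hs : Overlaps A A s) (k : ℕ) :
    Overlaps A A (k * s) := by
  induction k with
  | zero => simpa using overlaps_self_zero A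
  | succ k ih =>
    intro j hj
    calc A ⟨(k + 1) * s + j, hj⟩ = A ⟨s + (k * s + j), by linarith⟩ :=
          congrArg A (Fin.ext (by ring))
      _ = A ⟨k * s + j, by linarith⟩ := hs _ _
      _ = A ⟨j, by omega⟩ := ih j _

theorem conway_condition_iff_overlaps {n : ℕ} (A B : Fin n → Bool) (i : Fin n) :
    (∀ j : Fin n, (i : ℕ) + (j : ℕ) < n → A (i + j) = B j) ↔ Overlaps A B i := by
  have hadd : ∀ (j : Fin n) (h : (i : ℕ) + j < n), i + j = ⟨i + j, h⟩ :=
    fun j h => Fin.ext (by rw [Fin.val_add, Nat.mod_eq_of_lt h])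
  constructor
  · intro h j hj
    rw [← hadd ⟨j, by omega⟩ hj]
    exact h _ hj
  · intro h j hj
    rw [hadd j hj]
    exact h j hj

open Classical in
theorem conway_eq_sum_range {n : ℕ} (A B : Fin n → Bool) :
    conway A B = ∑ j ∈ range n, if Overlaps A B (n - 1 - j) then 2 ^ j else 0 := by
  rw [← sum_range_reflect, ← Fin.sum_univ_eq_sum_range (fun i => _) n]
  refine Fintype.sum_congr _ _ fun i => ?_
  rw [Nat.sub_sub_self (by omega : (i : ℕ) ≤ n - 1)]
  exact if_congr (conway_condition_iff_overlaps A B i) rfl rfl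

open Classical in
theorem conway_eq_sum_range_add_two_pow_mul {n : ℕ} (A B : Fin n → Bool) {k l : ℕ}
    (hn : n = k + l) :
    conway A B = (∑ j ∈ range k, if Overlaps A B (n - 1 - j) then 2 ^ j else 0) +
      2 ^ k * ∑ x ∈ range l, if Overlaps A B (l - 1 - x) then 2 ^ x else 0 := by
  subst hn
  rw [conway_eq_sum_range, sum_range_add, mul_sum]
  congr 1
  refine sum_congr rfl fun x hx => ?_
  rw [mem_range] at hx
  rw [show k + l - 1 - (k + x) = l - 1 - x by omega, mul_ite, mul_zero, pow_add]

section Binary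

variable (p : ℕ → Prop) [DecidablePred p]

theorem sum_range_ite_two_pow_lt (k : ℕ) :
    ∑ j ∈ range k, (if p j then 2 ^ j else 0) < 2 ^ k := by
  induction k with
  | zero => simp
  | succ k ih =>
    rw [sum_range_succ, pow_succ]
    split_ifs <;> omega

variable {p}

theorem not_of_sum_range_ite_two_pow_eq_one {k : ℕ}
    (hsum : ∑ j ∈ range k, (if p j then 2 ^ j else 0) = 1) {j : ℕ} (hj : 1 ≤ j) (hjk : j < k) :
    ¬ p j := by
  intro hp
  have hle := single_le_sum (f := fun j => if p j then 2 ^ j else 0) (by simp)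
    (mem_range.2 hjk)
  have : 2 ≤ 2 ^ j := Nat.le_self_pow (by omega) 2
  simp only [if_pos hp] at hle
  omega

theorem sum_range_ite_two_pow_eq_of_gap {m : ℕ} (h0 : p 0)
    (hgap : ∀ s, 1 ≤ s → s ≤ m → ¬ p s) :
    ∑ x ∈ range (m + 2), (if p (m + 1 - x) then 2 ^ x else 0) =
      2 ^ (m + 1) + if p (m + 1) then 1 else 0 := by
  have hmid : ∑ x ∈ range m, (if p (m + 1 - (x + 1)) then 2 ^ (x + 1) else 0) = 0 :=
    sum_eq_zero fun x hx => if_neg (hgap _ (by have := mem_range.1 hx; omega) (by omega))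
  rw [sum_range_succ, sum_range_succ', hmid, Nat.sub_self, if_pos h0]
  simp only [Nat.sub_zero, pow_zero]
  ring

end Binary

theorem exists_mul_mem_Icc {m s : ℕ} (hm : 2 ≤ m) (hs : 1 ≤ s) (hsm : s ≤ m) :
    ∃ k, m + 2 ≤ k * s ∧ k * s ≤ 2 * m := by
  rcases hsm.eq_or_lt with rfl | hlt
  · exact ⟨2, by omega, le_rfl⟩
  · refine ⟨(m + 1) / s + 1, ?_, ?_⟩ <;>
    · have := Nat.div_add_mod (m + 1) s
      have := Nat.mod_lt (m + 1) hs
      rw [add_mul, one_mul, mul_comm]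
      omega

/-- If `m ≥ 2` and `A` is a string of length `2m+2` whose autocorrelation is congruent to
`1` modulo `2^m`, then its autocorrelation equals `2^{2m+1} + 1` or `2^{2m+1} + 2^m + 1`. -/
theorem autocorr_even_length' (m : ℕ) (hm : 2 ≤ m) (A : Fin (2 * m + 2) → Bool)
    (h : conway A A ≡ 1 [MOD 2 ^ m]) :
    conway A A = 2 ^ (2 * m + 1) + 1 ∨ conway A A = 2 ^ (2 * m + 1) + 2 ^ m + 1 := by
  classical
  have hC := conway_eq_sum_range_add_two_pow_mul A A (k := m) (l := m + 2) (by ring)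
  set L := ∑ j ∈ range m, if Overlaps A A (2 * m + 2 - 1 - j) then 2 ^ j else 0
  have hL : L = 1 := by
    have hlow := sum_range_ite_two_pow_lt (fun j => Overlaps A A (2 * m + 2 - 1 - j)) m
    have hone : 1 < 2 ^ m := Nat.one_lt_two_pow (by omega)
    rwa [Nat.ModEq, hC, Nat.add_mul_mod_self_left, Nat.mod_eq_of_lt hlow,
      Nat.mod_eq_of_lt hone] at h
  have hhigh : ∀ t, m + 2 ≤ t → t ≤ 2 * m → ¬ Overlaps A A t := fun t ht₁ ht₂ => by
    have := not_of_sum_range_ite_two_pow_eq_one hL (j := 2 * m + 1 - t) (by omega) (by omega)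
    rwa [show 2 * m + 2 - 1 - (2 * m + 1 - t) = t by omega] at this
  have hlow : ∀ s, 1 ≤ s → s ≤ m → ¬ Overlaps A A s := fun s hs₁ hs₂ hs => by
    obtain ⟨k, hk₁, hk₂⟩ := exists_mul_mem_Icc hm hs₁ hs₂
    exact hhigh _ hk₁ hk₂ (hs.self_mul k)
  rw [hC, hL, show m + 2 - 1 = m + 1 by omega,
    sum_range_ite_two_pow_eq_of_gap (overlaps_self_zero A) hlow]
  split_ifs
  · right; ring
  · left; ring
end

section
/- Let A = a_1…a_n be a head/tail string of length n and let δ_1…δ_n be the bits of its autocorrelation (so δ_i = 1 if and only if a_{i+j} = a_{1+j} for all j = 0,…,n−i). If δ_k = 1 for some k with 2 ≤ k ≤ n, then for every positive integer q with q(k−1) + 1 ≤ n one has δ_{q(k−1)+1} = 1; consequently, among any k−1 consecutive indices in {1,…,n} there is at least one index i with δ_i = 1. -/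
/-- `deltaBit A i` expresses that the bit `δ_i` (1-indexed, `1 ≤ i ≤ n`) of the
autocorrelation of `A` equals `1`, i.e. `a_{i+j} = a_{1+j}` for all `j = 0,…,n-i`
(here `A` is 0-indexed). -/
def deltaBit {n : ℕ} (A : Fin n → Bool) (i : ℕ) : Prop :=
  ∀ j : ℕ, (h : i - 1 + j < n) → A ⟨i - 1 + j, h⟩ = A ⟨j, by omega⟩

/-- If `δ_k = 1` for some `2 ≤ k ≤ n`, then `δ_{q(k-1)+1} = 1` for every positive `q`
with `q(k-1)+1 ≤ n`; consequently, among any `k-1` consecutive indices in `{1,…,n}`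
there is at least one index `i` with `δ_i = 1`. -/
theorem deltaBit_propagation (n k : ℕ) (A : Fin n → Bool) (hk2 : 2 ≤ k) (hkn : k ≤ n)
    (hδ : deltaBit A k) :
    (∀ q : ℕ, 0 < q → q * (k - 1) + 1 ≤ n → deltaBit A (q * (k - 1) + 1)) ∧
      ∀ a : ℕ, 1 ≤ a → a + (k - 2) ≤ n →
        ∃ i : ℕ, a ≤ i ∧ i ≤ a + (k - 2) ∧ deltaBit A i := by
  have key : ∀ q j, (h : q * (k - 1) + j < n) → A ⟨q * (k - 1) + j, h⟩ = A ⟨j, by omega⟩ := by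
    intro q
    induction q with
    | zero => intro j h; congr 1; apply Fin.ext; simp
    | succ q ih =>
      intro j h
      have h1 : k - 1 + (q * (k - 1) + j) < n := by
        have : (q + 1) * (k - 1) + j = k - 1 + (q * (k - 1) + j) := by ring
        omega
      have e1 : A ⟨(q + 1) * (k - 1) + j, h⟩ = A ⟨k - 1 + (q * (k - 1) + j), h1⟩ := by
        congr 1
        all_goals
          apply Fin.ext
          show (q + 1) * (k - 1) + j = k - 1 + (q * (k - 1) + j)
          ring
      rw [e1, hδ (q * (k - 1) + j) h1, ih j (by omega)]
  have dq : ∀ q, q * (k - 1) + 1 ≤ n → deltaBit A (q * (k - 1) + 1) := by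
    intro q hq j hj
    have hj' : q * (k - 1) + j < n := by omega
    have e1 : A ⟨q * (k - 1) + 1 - 1 + j, hj⟩ = A ⟨q * (k - 1) + j, hj'⟩ := by
      congr 1
      all_goals
        apply Fin.ext
        show q * (k - 1) + 1 - 1 + j = q * (k - 1) + j
        omega
    rw [e1, key q j hj']
  constructor
  · intro q _ hq; exact dq q hq
  · intro a ha han
    set q := (a - 1 + (k - 2)) / (k - 1) with hqdef
    have hk1 : 0 < k - 1 := by omega
    have hle : q * (k - 1) ≤ a - 1 + (k - 2) := Nat.div_mul_le_self _ _
    have hge : a - 1 ≤ q * (k - 1) := by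
      have hm := Nat.div_add_mod (a - 1 + (k - 2)) (k - 1)
      have hr : (a - 1 + (k - 2)) % (k - 1) < k - 1 := Nat.mod_lt _ hk1
      rw [mul_comm]
      rw [hqdef]
      generalize hG : (k - 1) * ((a - 1 + (k - 2)) / (k - 1)) = m at hm ⊢
      omega
    refine ⟨q * (k - 1) + 1, by omega, by omega, dq q (by omega)⟩
end
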